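/- arXiv:1010.4522 — 3 statements merged into one kernel-verified Lean document; each statement's English description precedes it below -/
import Mathlib

section
/- Let (E,‖·‖) be a random normed module over ℂ with base (Ω,𝓕,P). Define on the set E* of P-a.e. bounded random linear functionals the map ‖f‖* = sup{|f(y)| : y ∈ E, ‖y‖ ≤ 1} (supremum in the complete lattice L⁰₊). Then (E*, ‖·‖*) is itself a random normed module over ℂ with base (Ω,𝓕,P), with module action (ξ·f)(x) = ξ·f(x). -/
open MeasureTheory

noncomputable instance AEEqFun.instCommRing' {α γ : Type*} [MeasurableSpace α] {μ : Measure α}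
    [TopologicalSpace γ] [CommRing γ] [IsTopologicalRing γ] : CommRing (α →ₘ[μ] γ) :=
  { (inferInstance : AddCommGroup (α →ₘ[μ] γ)),
    (inferInstance : CommMonoid (α →ₘ[μ] γ)) with
    left_distrib := fun f g h => by
      apply AEEqFun.ext
      filter_upwards [AEEqFun.coeFn_mul f (g + h), AEEqFun.coeFn_add g h,
        AEEqFun.coeFn_mul f g, AEEqFun.coeFn_mul f h,
        AEEqFun.coeFn_add (f * g) (f * h)] with a h1 h2 h3 h4 h5
      simp only [Pi.mul_apply, Pi.add_apply] at *
      rw [h1, h2, h5, h3, h4, mul_add]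
    right_distrib := fun f g h => by
      apply AEEqFun.ext
      filter_upwards [AEEqFun.coeFn_mul (f + g) h, AEEqFun.coeFn_add f g,
        AEEqFun.coeFn_mul f h, AEEqFun.coeFn_mul g h,
        AEEqFun.coeFn_add (f * h) (g * h)] with a h1 h2 h3 h4 h5
      simp only [Pi.mul_apply, Pi.add_apply] at *
      rw [h1, h2, h5, h3, h4, add_mul]
    zero_mul := fun f => by
      apply AEEqFun.ext
      filter_upwards [AEEqFun.coeFn_mul 0 f, AEEqFun.coeFn_zero (α := α) (μ := μ) (β := γ)]
        with a h1 h2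
      simp only [Pi.mul_apply] at *
      rw [h1, h2]
      simp
    mul_zero := fun f => by
      apply AEEqFun.ext
      filter_upwards [AEEqFun.coeFn_mul f 0, AEEqFun.coeFn_zero (α := α) (μ := μ) (β := γ)]
        with a h1 h2
      simp only [Pi.mul_apply] at *
      rw [h1, h2]
      simp }

namespace RNM

variable {Ω : Type} [MeasurableSpace Ω] {P : Measure Ω}

/-- the pointwise absolute value `L⁰(𝓕,ℂ) → L⁰(𝓕,ℝ)`. -/
noncomputable def L0abs (ξ : Ω →ₘ[P] ℂ) : Ω →ₘ[P] ℝ :=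
  ξ.comp (fun z => ‖z‖) continuous_norm

/-- the canonical embedding `L⁰(𝓕,ℝ) → L⁰(𝓕,ℂ)`. -/
noncomputable def ofRealC (ξ : Ω →ₘ[P] ℝ) : Ω →ₘ[P] ℂ :=
  ξ.comp Complex.ofReal Complex.continuous_ofReal

/-- pointwise complex conjugation on `L⁰(𝓕,ℂ)`. -/
noncomputable def conjC (ξ : Ω →ₘ[P] ℂ) : Ω →ₘ[P] ℂ :=
  ξ.comp (fun z => starRingEnd ℂ z) Complex.continuous_conj

/-- `ξ ∈ L⁰₊₊`, i.e. `ξ > 0` a.e. on `Ω`. -/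
def L0pos (ξ : Ω →ₘ[P] ℝ) : Prop := ∀ᵐ ω ∂P, 0 < ξ ω

/-- `ξ < η` (a.e.) on the whole of `Ω`. -/
def ltAE (ξ η : Ω →ₘ[P] ℝ) : Prop := ∀ᵐ ω ∂P, ξ ω < η ω

/-- the equivalence class `Ĩ_A ∈ L⁰(𝓕,ℂ)` of the indicator of a measurable set `A`. -/
noncomputable def indC (A : Set Ω) (hA : MeasurableSet A) : Ω →ₘ[P] ℂ :=
  AEEqFun.mk (A.indicator fun _ => (1 : ℂ)) (aestronglyMeasurable_const.indicator hA)

/-- the equivalence class `Ĩ_A ∈ L⁰(𝓕,ℝ)` of the indicator of a measurable set `A`. -/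
noncomputable def indR (A : Set Ω) (hA : MeasurableSet A) : Ω →ₘ[P] ℝ :=
  AEEqFun.mk (A.indicator fun _ => (1 : ℝ)) (aestronglyMeasurable_const.indicator hA)

section AELemmas

lemma L0abs_ae (ξ : Ω →ₘ[P] ℂ) : ∀ᵐ ω ∂P, (L0abs ξ) ω = ‖ξ ω‖ :=
  AEEqFun.coeFn_comp _ _ ξ

lemma le_ae {ξ η : Ω →ₘ[P] ℝ} (h : ξ ≤ η) : ∀ᵐ ω ∂P, ξ ω ≤ η ω :=
  AEEqFun.coeFn_le.2 h

lemma le_of_ae {ξ η : Ω →ₘ[P] ℝ} (h : ∀ᵐ ω ∂P, ξ ω ≤ η ω) : ξ ≤ η :=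
  AEEqFun.coeFn_le.1 h

lemma mul_ae {γ : Type*} [TopologicalSpace γ] [CommRing γ] [IsTopologicalRing γ]
    (ξ η : Ω →ₘ[P] γ) : ∀ᵐ ω ∂P, (ξ * η) ω = ξ ω * η ω :=
  AEEqFun.coeFn_mul ξ η

lemma add_ae {γ : Type*} [TopologicalSpace γ] [AddGroup γ] [IsTopologicalAddGroup γ]
    (ξ η : Ω →ₘ[P] γ) : ∀ᵐ ω ∂P, (ξ + η) ω = ξ ω + η ω :=
  AEEqFun.coeFn_add ξ η

lemma sub_ae {γ : Type*} [TopologicalSpace γ] [AddGroup γ] [IsTopologicalAddGroup γ]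
    (ξ η : Ω →ₘ[P] γ) : ∀ᵐ ω ∂P, (ξ - η) ω = ξ ω - η ω :=
  AEEqFun.coeFn_sub ξ η

lemma zero_ae (γ : Type*) [TopologicalSpace γ] [Zero γ] :
    ∀ᵐ ω ∂P, (0 : Ω →ₘ[P] γ) ω = 0 :=
  AEEqFun.coeFn_zero

lemma one_ae (γ : Type*) [TopologicalSpace γ] [One γ] :
    ∀ᵐ ω ∂P, (1 : Ω →ₘ[P] γ) ω = 1 :=
  AEEqFun.coeFn_one

end AELemmas

/-- a countable measurable partition of `Ω`. -/
structure IsMPartition (A : ℕ → Set Ω) : Prop where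
  meas : ∀ n, MeasurableSet (A n)
  disj : Pairwise (Function.onFun Disjoint A)
  cover : (⋃ n, A n) = Set.univ

section Module

variable {E : Type*} [AddCommGroup E] [Module (Ω →ₘ[P] ℂ) E]

variable (P E) in
/-- `E` has the countable concatenation property. -/
def HasCCP : Prop :=
  ∀ (A : ℕ → Set Ω) (hA : IsMPartition A) (x : ℕ → E),
    ∃ x0 : E, ∀ n, indC (P := P) (A n) (hA.meas n) • x0 = indC (P := P) (A n) (hA.meas n) • x n

/-- a subset `S` of `E` has the countable concatenation property. -/
def SetCCP (S : Set E) : Prop :=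
  ∀ (A : ℕ → Set Ω) (hA : IsMPartition A) (x : ℕ → E), (∀ n, x n ∈ S) →
    ∃ x0 ∈ S, ∀ n, indC (P := P) (A n) (hA.meas n) • x0 = indC (P := P) (A n) (hA.meas n) • x n

/-- the countable concatenation hull `H_cc(S)` of a subset `S` of `E`. -/
def Hcc (S : Set E) : Set E :=
  {x | ∃ (A : ℕ → Set Ω) (hA : IsMPartition A) (m : ℕ → E), (∀ n, m n ∈ S) ∧
    ∀ n, indC (P := P) (A n) (hA.meas n) • x = indC (P := P) (A n) (hA.meas n) • m n}

/-- `L⁰`-convexity of a subset of an `L⁰(𝓕,ℂ)`-module. -/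
def L0Convex (S : Set E) : Prop :=
  ∀ x ∈ S, ∀ y ∈ S, ∀ ξ : Ω →ₘ[P] ℝ, 0 ≤ ξ → ξ ≤ 1 →
    ofRealC ξ • x + ofRealC (1 - ξ) • y ∈ S

/-- the random-norm axioms for `nrm : E → L⁰₊`, making `(E, nrm)` an `RN` module over `ℂ`. -/
structure IsRNNorm (nrm : E → (Ω →ₘ[P] ℝ)) : Prop where
  nonneg : ∀ x, 0 ≤ nrm x
  eq_zero_iff : ∀ x, nrm x = 0 ↔ x = 0
  smul_eq : ∀ (ξ : Ω →ₘ[P] ℂ) (x : E), nrm (ξ • x) = L0abs ξ * nrm x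
  add_le : ∀ x y, nrm (x + y) ≤ nrm x + nrm y

/-- the submodule of `P`-a.e. bounded random linear functionals on `(E, nrm)`:
the random conjugate space `E*`. -/
noncomputable def rdual (nrm : E → (Ω →ₘ[P] ℝ)) :
    Submodule (Ω →ₘ[P] ℂ) (E →ₗ[Ω →ₘ[P] ℂ] (Ω →ₘ[P] ℂ)) where
  carrier := {f | ∃ ξ : Ω →ₘ[P] ℝ, 0 ≤ ξ ∧ ∀ x, L0abs (f x) ≤ ξ * nrm x}
  zero_mem' := by
    refine ⟨0, le_refl 0, fun x => ?_⟩
    apply le_of_ae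
    have e0 : ((0 : E →ₗ[Ω →ₘ[P] ℂ] (Ω →ₘ[P] ℂ)) x) = (0 : Ω →ₘ[P] ℂ) := rfl
    filter_upwards [L0abs_ae ((0 : E →ₗ[Ω →ₘ[P] ℂ] (Ω →ₘ[P] ℂ)) x),
      mul_ae (0 : Ω →ₘ[P] ℝ) (nrm x), zero_ae ℝ, zero_ae ℂ] with ω h1 h2 h3 h4
    rw [h1, h2, h3, e0, h4]
    simp
  add_mem' := by
    rintro f g ⟨ξ, hξ0, hξ⟩ ⟨η, hη0, hη⟩
    have hsum : (0 : Ω →ₘ[P] ℝ) ≤ ξ + η := by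
      apply le_of_ae
      filter_upwards [le_ae hξ0, le_ae hη0, add_ae ξ η, zero_ae ℝ] with ω h1 h2 h3 h4
      rw [h3, h4]
      rw [h4] at h1 h2
      linarith
    refine ⟨ξ + η, hsum, fun x => ?_⟩
    apply le_of_ae
    have e1 : ((f + g) x) = f x + g x := rfl
    filter_upwards [L0abs_ae ((f + g) x), add_ae (f x) (g x),
      mul_ae (ξ + η) (nrm x), add_ae ξ η, mul_ae ξ (nrm x), mul_ae η (nrm x),
      le_ae (hξ x), le_ae (hη x), L0abs_ae (f x), L0abs_ae (g x)]
      with ω h1 h2 h3 h4 h5 h6 h7 h8 h9 h10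
    rw [h1, h3, h4, e1, h2]
    rw [h9, h5] at h7
    rw [h10, h6] at h8
    calc ‖f x ω + g x ω‖ ≤ ‖f x ω‖ + ‖g x ω‖ :=
          norm_add_le _ _
      _ ≤ ξ ω * nrm x ω + η ω * nrm x ω := add_le_add h7 h8
      _ = (ξ ω + η ω) * nrm x ω := by ring
  smul_mem' := by
    rintro c f ⟨ξ, hξ0, hξ⟩
    have hpos : (0 : Ω →ₘ[P] ℝ) ≤ L0abs c * ξ := by
      apply le_of_ae
      filter_upwards [mul_ae (L0abs c) ξ, L0abs_ae c, le_ae hξ0, zero_ae ℝ]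
        with ω h1 h2 h3 h4
      rw [h1, h2, h4]
      rw [h4] at h3
      positivity
    refine ⟨L0abs c * ξ, hpos, fun x => ?_⟩
    apply le_of_ae
    have e1 : ((c • f) x) = c * f x := rfl
    filter_upwards [L0abs_ae ((c • f) x), mul_ae c (f x),
      mul_ae (L0abs c * ξ) (nrm x), mul_ae (L0abs c) ξ, L0abs_ae c,
      le_ae (hξ x), L0abs_ae (f x), mul_ae ξ (nrm x)] with ω h1 h2 h3 h4 h5 h6 h7 h8
    rw [h1, h3, h4, h5, e1, h2]
    rw [h7, h8] at h6
    have h0 : (0:ℝ) ≤ ‖c ω‖ := norm_nonneg _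
    calc ‖c ω * f x ω‖ = ‖c ω‖ * ‖f x ω‖ := norm_mul _ _
      _ ≤ ‖c ω‖ * (ξ ω * nrm x ω) := mul_le_mul_of_nonneg_left h6 h0
      _ = ‖c ω‖ * ξ ω * nrm x ω := by ring

/-- the conjugate random norm `‖f‖* = ⋁{|f(y)| : ‖y‖ ≤ 1}` (the lattice supremum, when
it exists). -/
noncomputable def dnorm (nrm : E → (Ω →ₘ[P] ℝ))
    (f : E →ₗ[Ω →ₘ[P] ℂ] (Ω →ₘ[P] ℂ)) : Ω →ₘ[P] ℝ := by
  classical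
  exact if h : ∃ s : Ω →ₘ[P] ℝ, IsLUB {a | ∃ y : E, nrm y ≤ 1 ∧ a = L0abs (f y)} s
    then h.choose else 0

/-- the random natural embedding of `E` into functionals on its random conjugate space. -/
noncomputable def Jmap (nrm : E → (Ω →ₘ[P] ℝ)) (x : E) :
    (↥(rdual nrm)) →ₗ[Ω →ₘ[P] ℂ] (Ω →ₘ[P] ℂ) where
  toFun f := f.1 x
  map_add' f g := rfl
  map_smul' c f := rfl

end Module

section Topologies

/-- a topology built from a directed family of "balls". -/
def ballTop {X ι : Type*} [Nonempty ι] (ball : X → ι → Set X)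
    (dir : ∀ x i j, ∃ k, ball x k ⊆ ball x i ∩ ball x j) : TopologicalSpace X where
  IsOpen B := ∀ x ∈ B, ∃ i, ball x i ⊆ B
  isOpen_univ := fun x _ => ⟨Classical.arbitrary ι, fun _ _ => trivial⟩
  isOpen_inter := fun B C hB hC x hx => by
    obtain ⟨i, hi⟩ := hB x hx.1
    obtain ⟨j, hj⟩ := hC x hx.2
    obtain ⟨k, hk⟩ := dir x i j
    exact ⟨k, fun y hy => ⟨hi (hk hy).1, hj (hk hy).2⟩⟩
  isOpen_sUnion := fun S hS x hx => by
    obtain ⟨B, hB, hxB⟩ := hx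
    obtain ⟨i, hi⟩ := hS B hB x hxB
    exact ⟨i, fun y hy => ⟨B, hB, hi hy⟩⟩

instance L0posNonempty : Nonempty {ε : Ω →ₘ[P] ℝ // L0pos ε} := by
  refine ⟨⟨1, ?_⟩⟩
  filter_upwards [one_ae (P := P) ℝ] with ω h
  rw [h]; exact one_pos

instance : Nonempty {e : ℝ // 0 < e} := ⟨⟨1, one_pos⟩⟩

instance : Nonempty {l : ℝ // 0 < l ∧ l < 1} := ⟨⟨1/2, by norm_num⟩⟩

lemma L0pos_inf {ε δ : Ω →ₘ[P] ℝ} (hε : L0pos ε) (hδ : L0pos δ) : L0pos (ε ⊓ δ) := by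
  filter_upwards [hε, hδ, AEEqFun.coeFn_inf ε δ] with ω h1 h2 h3
  rw [h3]; exact lt_inf_iff.2 ⟨h1, h2⟩

lemma ltAE_inf {a ε δ : Ω →ₘ[P] ℝ} (h : ltAE a (ε ⊓ δ)) : ltAE a ε ∧ ltAE a δ := by
  constructor
  · filter_upwards [h, AEEqFun.coeFn_inf ε δ] with ω h1 h2
    rw [h2] at h1; exact h1.trans_le inf_le_left
  · filter_upwards [h, AEEqFun.coeFn_inf ε δ] with ω h1 h2
    rw [h2] at h1; exact h1.trans_le inf_le_right

variable {E : Type*} [AddCommGroup E] [Module (Ω →ₘ[P] ℂ) E]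

/-- the locally `L⁰`-convex topology `𝓣_c` on an `RN` module `(E, nrm)`. -/
noncomputable def TcTop (nrm : E → (Ω →ₘ[P] ℝ)) : TopologicalSpace E :=
  ballTop (ι := {ε : Ω →ₘ[P] ℝ // L0pos ε})
    (fun x ε => {y | ltAE (nrm (y - x)) ε.1})
    (by
      rintro x ⟨ε, hε⟩ ⟨δ, hδ⟩
      exact ⟨⟨ε ⊓ δ, L0pos_inf hε hδ⟩, fun y hy => ⟨(ltAE_inf hy).1, (ltAE_inf hy).2⟩⟩)

/-- the `(ε,λ)`-topology `𝓣_{ε,λ}` on an `RN` module `(E, nrm)`. -/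
noncomputable def TelTop (nrm : E → (Ω →ₘ[P] ℝ)) : TopologicalSpace E :=
  ballTop (ι := {e : ℝ // 0 < e} × {l : ℝ // 0 < l ∧ l < 1})
    (fun x i => {y | ENNReal.ofReal (1 - i.2.1) < P {ω | nrm (y - x) ω < i.1.1}})
    (by
      rintro x ⟨⟨e₁, he₁⟩, ⟨l₁, hl₁⟩⟩ ⟨⟨e₂, he₂⟩, ⟨l₂, hl₂⟩⟩
      refine ⟨⟨⟨min e₁ e₂, lt_min he₁ he₂⟩,
        ⟨min l₁ l₂, lt_min hl₁.1 hl₂.1, lt_of_le_of_lt (min_le_left _ _) hl₁.2⟩⟩,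
        fun y hy => ⟨?_, ?_⟩⟩ <;> simp only [Set.mem_setOf_eq] at hy ⊢
      · refine lt_of_le_of_lt (ENNReal.ofReal_le_ofReal (by
          have := min_le_left l₁ l₂; linarith)) (hy.trans_le (measure_mono fun ω hω =>
          show nrm (y - x) ω < e₁ from lt_of_lt_of_le hω (min_le_left _ _)))
      · refine lt_of_le_of_lt (ENNReal.ofReal_le_ofReal (by
          have := min_le_right l₁ l₂; linarith)) (hy.trans_le (measure_mono fun ω hω =>
          show nrm (y - x) ω < e₂ from lt_of_lt_of_le hω (min_le_right _ _))))

variable (P) in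
/-- the locally `L⁰`-convex weak star topology `σ_c` on the space of random linear
functionals on a module `M`, induced by the pairing with `M`. -/
noncomputable def sigmaCTop (M : Type*) [AddCommGroup M] [Module (Ω →ₘ[P] ℂ) M] :
    TopologicalSpace (M →ₗ[Ω →ₘ[P] ℂ] (Ω →ₘ[P] ℂ)) :=
  ballTop (ι := Finset M × {ε : Ω →ₘ[P] ℝ // L0pos ε})
    (fun g i => {h | ∀ x ∈ i.1, ltAE (L0abs (h x - g x)) i.2.1})
    (by
      classical
      rintro g ⟨s, ε, hε⟩ ⟨t, δ, hδ⟩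
      refine ⟨⟨s ∪ t, ⟨ε ⊓ δ, L0pos_inf hε hδ⟩⟩, fun h hh => ⟨?_, ?_⟩⟩
      · exact fun x hx => (ltAE_inf (hh x (Finset.mem_union_left t hx))).1
      · exact fun x hx => (ltAE_inf (hh x (Finset.mem_union_right s hx))).2)

variable (P) in
/-- the `(ε,λ)` weak star topology `σ_{(ε,λ)}` on the space of random linear functionals
on a module `M`, induced by the pairing with `M`. -/
noncomputable def sigmaElTop (M : Type*) [AddCommGroup M] [Module (Ω →ₘ[P] ℂ) M] :
    TopologicalSpace (M →ₗ[Ω →ₘ[P] ℂ] (Ω →ₘ[P] ℂ)) :=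
  ballTop (ι := Finset M × {e : ℝ // 0 < e} × {l : ℝ // 0 < l ∧ l < 1})
    (fun g i => {h | ∀ x ∈ i.1,
      ENNReal.ofReal (1 - i.2.2.1) < P {ω | (L0abs (h x - g x)) ω < i.2.1.1}})
    (by
      classical
      rintro g ⟨s, ⟨e₁, he₁⟩, ⟨l₁, hl₁⟩⟩ ⟨t, ⟨e₂, he₂⟩, ⟨l₂, hl₂⟩⟩
      refine ⟨⟨s ∪ t, ⟨min e₁ e₂, lt_min he₁ he₂⟩,
        ⟨min l₁ l₂, lt_min hl₁.1 hl₂.1, lt_of_le_of_lt (min_le_left _ _) hl₁.2⟩⟩,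
        fun h hh => ⟨fun x hx => ?_, fun x hx => ?_⟩⟩
      · refine lt_of_le_of_lt (ENNReal.ofReal_le_ofReal (by
          have := min_le_left l₁ l₂; linarith))
          ((hh x (Finset.mem_union_left t hx)).trans_le (measure_mono fun ω hω =>
            show (L0abs (h x - g x)) ω < e₁ from lt_of_lt_of_le hω (min_le_left _ _)))
      · refine lt_of_le_of_lt (ENNReal.ofReal_le_ofReal (by
          have := min_le_right l₁ l₂; linarith))
          ((hh x (Finset.mem_union_right s hx)).trans_le (measure_mono fun ω hω =>
            show (L0abs (h x - g x)) ω < e₂ from lt_of_lt_of_le hω (min_le_right _ _))))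

end Topologies

end RNM


/-! Every axiom for `‖f‖* = ⋁ {|f y| : ‖y‖ ≤ 1}` is read off the sets `{|f y| : ‖y‖ ≤ 1}`.
Nonnegativity and the triangle inequality hold because `0 = |f 0|` lies in the set and
`|(f + g) y| ≤ |f y| + |g y|`. If `‖f‖* = 0`, evaluating `f` at `(1 + ‖x‖)⁻¹ x` gives
`f x = 0`. For homogeneity, the set for `ξ f` is `|ξ|` times the set for `f`, and multiplying
by a nonnegative element of `L⁰` preserves suprema, although they are not pointwise. -/

namespace RNM

variable {Ω : Type} [MeasurableSpace Ω] {P : Measure Ω}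

lemma L0abs_nonneg (ξ : Ω →ₘ[P] ℂ) : 0 ≤ L0abs ξ :=
  le_of_ae <| by
    filter_upwards [L0abs_ae ξ, zero_ae ℝ] with ω h h0
    rw [h, h0]
    exact norm_nonneg _

lemma L0abs_zero : L0abs (0 : Ω →ₘ[P] ℂ) = 0 :=
  AEEqFun.ext <| by
    filter_upwards [L0abs_ae (0 : Ω →ₘ[P] ℂ), zero_ae ℂ, zero_ae ℝ] with ω h hℂ hℝ
    rw [h, hℂ, hℝ, norm_zero]

lemma L0abs_mul (ξ η : Ω →ₘ[P] ℂ) : L0abs (ξ * η) = L0abs ξ * L0abs η :=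
  AEEqFun.ext <| by
    filter_upwards [L0abs_ae (ξ * η), L0abs_ae ξ, L0abs_ae η, mul_ae ξ η,
      mul_ae (L0abs ξ) (L0abs η)] with ω h hξ hη hmul hmul'
    rw [h, hmul, hmul', hξ, hη, norm_mul]

lemma L0abs_add_le (ξ η : Ω →ₘ[P] ℂ) : L0abs (ξ + η) ≤ L0abs ξ + L0abs η :=
  le_of_ae <| by
    filter_upwards [L0abs_ae (ξ + η), L0abs_ae ξ, L0abs_ae η, add_ae ξ η,
      add_ae (L0abs ξ) (L0abs η)] with ω h hξ hη hadd hadd'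
    rw [h, hadd, hadd', hξ, hη]
    exact norm_add_le _ _

lemma ofRealC_ae (d : Ω →ₘ[P] ℝ) : ∀ᵐ ω ∂P, ofRealC d ω = d ω :=
  AEEqFun.coeFn_comp _ _ d

lemma L0abs_ofRealC {d : Ω →ₘ[P] ℝ} (hd : 0 ≤ d) : L0abs (ofRealC d) = d :=
  AEEqFun.ext <| by
    filter_upwards [L0abs_ae (ofRealC d), ofRealC_ae d, le_ae hd, zero_ae ℝ]
      with ω h hof hd hzero
    rw [h, hof, Complex.norm_real, Real.norm_of_nonneg (hzero ▸ hd)]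

instance : PosMulMono (Ω →ₘ[P] ℝ) where
  mul_le_mul_of_nonneg_left c hc a b h := le_of_ae <| by
    filter_upwards [le_ae h, le_ae hc, zero_ae ℝ, mul_ae c a, mul_ae c b]
      with ω h hc hzero hca hcb
    rw [hca, hcb]
    exact mul_le_mul_of_nonneg_left h (hzero ▸ hc)

instance : AddLeftMono (Ω →ₘ[P] ℝ) where
  elim c a b h := le_of_ae <| by
    filter_upwards [le_ae h, add_ae c a, add_ae c b] with ω h hca hcb
    rw [hca, hcb]
    exact add_le_add_right h _

/-- Suprema in `L⁰` are not pointwise, so the least-bound property of `c * s` is reduced to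
that of `s`: an upper bound `b` of `c • S` gives the upper bound `s + c⁻¹ (b - c s)` of `S`,
which equals `b / c` on `{c ≠ 0}` and `s` on `{c = 0}`. -/
lemma isLUB_mul_left {S : Set (Ω →ₘ[P] ℝ)} {c s : Ω →ₘ[P] ℝ} (hc : 0 ≤ c) (hS : IsLUB S s)
    (hne : S.Nonempty) : IsLUB ((c * ·) '' S) (c * s) := by
  refine ⟨?_, fun b hb => ?_⟩
  · rintro _ ⟨a, ha, rfl⟩
    exact mul_le_mul_of_nonneg_left (hS.1 ha) hc
  set cinv := c.compMeasurable (·⁻¹) measurable_inv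
  have hcinv : ∀ᵐ ω ∂P, cinv ω = (c ω)⁻¹ := AEEqFun.coeFn_compMeasurable _ _ c
  set b' := s + cinv * (b - c * s)
  have hb' : ∀ᵐ ω ∂P, b' ω = s ω + (c ω)⁻¹ * (b ω - c ω * s ω) := by
    filter_upwards [add_ae s (cinv * (b - c * s)), mul_ae cinv (b - c * s), hcinv,
      sub_ae b (c * s), mul_ae c s] with ω h1 h2 h3 h4 h5
    rw [h1, h2, h3, h4, h5]
  have hsb' : s ≤ b' := hS.2 fun a ha => le_of_ae <| by
    filter_upwards [hb', le_ae (hb ⟨a, ha, rfl⟩), le_ae (hS.1 ha), mul_ae c a, le_ae hc,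
      zero_ae ℝ] with ω hb'ω hca has hmul hc hzero
    rw [hb'ω]
    rw [hmul] at hca
    rw [hzero] at hc
    rcases hc.eq_or_lt with h0 | h0
    · simpa [← h0] using has
    · rw [show s ω + (c ω)⁻¹ * (b ω - c ω * s ω) = (c ω)⁻¹ * b ω by field_simp; ring]
      exact (le_inv_mul_iff₀ h0).2 hca
  obtain ⟨a₀, ha₀⟩ := hne
  refine le_of_ae ?_
  filter_upwards [hb', le_ae hsb', le_ae hc, zero_ae ℝ, le_ae (hb ⟨a₀, ha₀, rfl⟩),
    mul_ae c a₀, mul_ae c s] with ω hb'ω hsb' hc hzero hca₀ hmul₀ hmul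
  rw [hmul]
  rw [hb'ω] at hsb'
  rw [hmul₀] at hca₀
  rw [hzero] at hc
  rcases hc.eq_or_lt with h0 | h0
  · simpa [← h0] using hca₀
  · rw [show s ω + (c ω)⁻¹ * (b ω - c ω * s ω) = (c ω)⁻¹ * b ω by field_simp; ring] at hsb'
    exact (le_inv_mul_iff₀ h0).1 hsb'


section Dual

variable {E : Type*} [AddCommGroup E] [Module (Ω →ₘ[P] ℂ) E] {nrm : E → Ω →ₘ[P] ℝ}

variable (nrm) in
def absOnUnitBall (f : E →ₗ[Ω →ₘ[P] ℂ] (Ω →ₘ[P] ℂ)) : Set (Ω →ₘ[P] ℝ) :=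
  {a | ∃ y : E, nrm y ≤ 1 ∧ a = L0abs (f y)}

lemma zero_mem_absOnUnitBall (hnrm : IsRNNorm nrm) (f : E →ₗ[Ω →ₘ[P] ℂ] (Ω →ₘ[P] ℂ)) :
    0 ∈ absOnUnitBall nrm f := by
  refine ⟨0, ?_, by rw [map_zero, L0abs_zero]⟩
  rw [(hnrm.eq_zero_iff 0).2 rfl]
  refine le_of_ae ?_
  filter_upwards [zero_ae ℝ, one_ae ℝ] with ω h0 h1
  rw [h0, h1]
  exact zero_le_one

lemma absOnUnitBall_zero (hnrm : IsRNNorm nrm) : absOnUnitBall nrm (0 : E →ₗ[Ω →ₘ[P] ℂ] _) = {0} :=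
  Set.eq_singleton_iff_unique_mem.2 ⟨zero_mem_absOnUnitBall hnrm 0,
    fun _ ⟨_, _, ha⟩ => by rw [ha, LinearMap.zero_apply, L0abs_zero]⟩

lemma absOnUnitBall_smul (ξ : Ω →ₘ[P] ℂ) (f : E →ₗ[Ω →ₘ[P] ℂ] (Ω →ₘ[P] ℂ)) :
    absOnUnitBall nrm (ξ • f) = (L0abs ξ * ·) '' absOnUnitBall nrm f := by
  ext a
  simp only [absOnUnitBall, Set.mem_image, Set.mem_ofPred_eq, LinearMap.smul_apply, smul_eq_mul,
    L0abs_mul]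
  constructor
  · rintro ⟨y, hy, rfl⟩
    exact ⟨_, ⟨y, hy, rfl⟩, rfl⟩
  · rintro ⟨_, ⟨y, hy, rfl⟩, rfl⟩
    exact ⟨y, hy, rfl⟩

lemma add_mem_upperBounds_absOnUnitBall {f g : E →ₗ[Ω →ₘ[P] ℂ] (Ω →ₘ[P] ℂ)}
    {s t : Ω →ₘ[P] ℝ} (hs : s ∈ upperBounds (absOnUnitBall nrm f))
    (ht : t ∈ upperBounds (absOnUnitBall nrm g)) :
    s + t ∈ upperBounds (absOnUnitBall nrm (f + g)) := by
  rintro _ ⟨y, hy, rfl⟩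
  rw [LinearMap.add_apply]
  exact (L0abs_add_le _ _).trans (add_le_add (hs ⟨y, hy, rfl⟩) (ht ⟨y, hy, rfl⟩))

lemma exists_pos_smul_norm_le_one (hnrm : IsRNNorm nrm) (x : E) :
    ∃ d : Ω →ₘ[P] ℝ, L0pos d ∧ 0 ≤ d ∧ nrm (ofRealC d • x) ≤ 1 := by
  have hcont : Continuous fun t : ℝ => (1 + |t|)⁻¹ :=
    (continuous_const.add continuous_abs).inv₀ fun t => (by positivity : (0 : ℝ) < 1 + |t|).ne'
  set d := (nrm x).comp _ hcont
  have hd : ∀ᵐ ω ∂P, d ω = (1 + |nrm x ω|)⁻¹ := AEEqFun.coeFn_comp _ hcont _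
  have hd0 : 0 ≤ d := le_of_ae <| by
    filter_upwards [hd, zero_ae ℝ] with ω hdω h0
    rw [hdω, h0]
    positivity
  refine ⟨d, ?_, hd0, ?_⟩
  · filter_upwards [hd] with ω hdω
    rw [hdω]
    positivity
  rw [hnrm.smul_eq, L0abs_ofRealC hd0]
  refine le_of_ae ?_
  filter_upwards [hd, mul_ae d (nrm x), one_ae ℝ] with ω hdω hmul h1
  rw [hmul, hdω, h1, inv_mul_le_iff₀ (by positivity)]
  linarith [le_abs_self (nrm x ω)]

lemma eq_zero_of_isLUB_absOnUnitBall_zero (hnrm : IsRNNorm nrm)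
    {f : E →ₗ[Ω →ₘ[P] ℂ] (Ω →ₘ[P] ℂ)} (h : IsLUB (absOnUnitBall nrm f) 0) : f = 0 := by
  ext x : 1
  obtain ⟨d, hdpos, hd0, hdx⟩ := exists_pos_smul_norm_le_one hnrm x
  have hle : d * L0abs (f x) ≤ 0 := by
    have := h.1 ⟨_, hdx, rfl⟩
    rwa [map_smul, smul_eq_mul, L0abs_mul, L0abs_ofRealC hd0] at this
  refine AEEqFun.ext ?_
  filter_upwards [hdpos, le_ae hle, mul_ae d (L0abs (f x)), L0abs_ae (f x), zero_ae ℝ,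
    zero_ae ℂ] with ω hdω hleω hmul habs hℝ hℂ
  rw [hmul, habs, hℝ] at hleω
  rw [LinearMap.zero_apply, hℂ, ← norm_le_zero_iff]
  exact nonpos_of_mul_nonpos_right hleω hdω

lemma isLUB_absOnUnitBall_smul (hnrm : IsRNNorm nrm) (ξ : Ω →ₘ[P] ℂ)
    {f : E →ₗ[Ω →ₘ[P] ℂ] (Ω →ₘ[P] ℂ)} {s : Ω →ₘ[P] ℝ} (h : IsLUB (absOnUnitBall nrm f) s) :
    IsLUB (absOnUnitBall nrm (ξ • f)) (L0abs ξ * s) := by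
  rw [absOnUnitBall_smul]
  exact isLUB_mul_left (L0abs_nonneg ξ) h ⟨0, zero_mem_absOnUnitBall hnrm f⟩

end Dual

end RNM

open MeasureTheory RNM in
theorem rdual_is_RN_module_general {Ω : Type} [MeasurableSpace Ω] {P : Measure Ω}
    {E : Type*} [AddCommGroup E] [Module (Ω →ₘ[P] ℂ) E]
    (nrm : E → Ω →ₘ[P] ℝ) (hnrm : IsRNNorm nrm)
    (N : (E →ₗ[Ω →ₘ[P] ℂ] (Ω →ₘ[P] ℂ)) → Ω →ₘ[P] ℝ)
    (hN : ∀ f ∈ rdual nrm, IsLUB {a | ∃ y : E, nrm y ≤ 1 ∧ a = L0abs (f y)} (N f)) :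
    (∀ f ∈ rdual nrm, 0 ≤ N f) ∧
    (∀ f ∈ rdual nrm, (N f = 0 ↔ f = 0)) ∧
    (∀ (ξ : Ω →ₘ[P] ℂ) (f : E →ₗ[Ω →ₘ[P] ℂ] (Ω →ₘ[P] ℂ)), f ∈ rdual nrm →
      N (ξ • f) = L0abs ξ * N f) ∧
    (∀ f ∈ rdual nrm, ∀ g ∈ rdual nrm, N (f + g) ≤ N f + N g) := by
  have hN : ∀ f ∈ rdual nrm, IsLUB (absOnUnitBall nrm f) (N f) := hN
  refine ⟨fun f hf => (hN f hf).1 (zero_mem_absOnUnitBall hnrm f), fun f hf => ⟨?_, ?_⟩,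
    fun ξ f hf => ?_, fun f hf g hg => ?_⟩
  · intro h0
    exact eq_zero_of_isLUB_absOnUnitBall_zero hnrm (h0 ▸ hN f hf)
  · rintro rfl
    exact (hN 0 hf).unique (absOnUnitBall_zero hnrm ▸ isLUB_singleton)
  · exact (hN _ (Submodule.smul_mem _ ξ hf)).unique (isLUB_absOnUnitBall_smul hnrm ξ (hN f hf))
  · exact (hN _ (Submodule.add_mem _ hf hg)).2
      (add_mem_upperBounds_absOnUnitBall (hN f hf).1 (hN g hg).1)

open MeasureTheory RNM in
/-- The random conjugate space `E*` of an `RN` module `(E, nrm)`, equipped with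
`‖f‖* = ⋁{|f y| : ‖y‖ ≤ 1}`, is itself an `RN` module over `ℂ` with base `(Ω,𝓕,P)`
(the closure of `E*` under the module operations is `rdual nrm` being a submodule). -/
theorem rdual_is_RN_module {Ω : Type} [MeasurableSpace Ω] {P : Measure Ω}
    [IsProbabilityMeasure P] {E : Type*} [AddCommGroup E] [Module (Ω →ₘ[P] ℂ) E]
    (nrm : E → Ω →ₘ[P] ℝ) (hnrm : IsRNNorm nrm)
    (N : (E →ₗ[Ω →ₘ[P] ℂ] (Ω →ₘ[P] ℂ)) → Ω →ₘ[P] ℝ)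
    (hN : ∀ f ∈ rdual nrm, IsLUB {a | ∃ y : E, nrm y ≤ 1 ∧ a = L0abs (f y)} (N f)) :
    (∀ f ∈ rdual nrm, 0 ≤ N f) ∧
    (∀ f ∈ rdual nrm, (N f = 0 ↔ f = 0)) ∧
    (∀ (ξ : Ω →ₘ[P] ℂ) (f : E →ₗ[Ω →ₘ[P] ℂ] (Ω →ₘ[P] ℂ)), f ∈ rdual nrm →
      N (ξ • f) = L0abs ξ * N f) ∧
    (∀ f ∈ rdual nrm, ∀ g ∈ rdual nrm, N (f + g) ≤ N f + N g) :=
  rdual_is_RN_module_general nrm hnrm N hN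
end

section
/- Let E be a left module over L⁰(𝓕,ℂ) and suppose every countable concatenation of elements of E along a countable measurable partition of Ω is well defined in E (E has the countable concatenation property). Then the countable concatenation hull H_cc(M) of any subset M of E has the countable concatenation property. -/
open MeasureTheory

/-! If each `x n` is glued from elements `m n k ∈ M` along a partition `B n`, then a
concatenation `x₀` of the `x n` along `A` (which exists since `E` has the countable
concatenation property) is glued from all the `m n k` along the common refinement
`A n ∩ B n k`, a partition indexed by `ℕ × ℕ ≃ ℕ`. -/

namespace RNM

variable {Ω : Type} [MeasurableSpace Ω] {P : Measure Ω}

local notation "Ĩ" => indC (P := P)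

lemma indC_inter {A B : Set Ω} (hA : MeasurableSet A) (hB : MeasurableSet B) :
    Ĩ (A ∩ B) (hA.inter hB) = Ĩ A hA * Ĩ B hB := by
  rw [indC, indC, indC, AEEqFun.mk_mul_mk]
  congr 1
  ext ω
  by_cases hωA : ω ∈ A <;> by_cases hωB : ω ∈ B <;> simp [hωA, hωB]

variable {E : Type*} [AddCommGroup E] [Module (Ω →ₘ[P] ℂ) E]

lemma indC_inter_smul_eq {A B : Set Ω} (hA : MeasurableSet A) (hB : MeasurableSet B)
    {x y z : E} (hxy : Ĩ A hA • x = Ĩ A hA • y) (hyz : Ĩ B hB • y = Ĩ B hB • z) :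
    Ĩ (A ∩ B) (hA.inter hB) • x = Ĩ (A ∩ B) (hA.inter hB) • z :=
  calc Ĩ (A ∩ B) (hA.inter hB) • x = Ĩ B hB • Ĩ A hA • x := by
        rw [indC_inter, mul_comm, mul_smul]
    _ = Ĩ A hA • Ĩ B hB • y := by rw [hxy, smul_comm]
    _ = Ĩ (A ∩ B) (hA.inter hB) • z := by rw [hyz, indC_inter, mul_smul]

lemma IsMPartition.refine {A : ℕ → Set Ω} (hA : IsMPartition A) {B : ℕ → ℕ → Set Ω}
    (hB : ∀ n, IsMPartition (B n)) (e : ℕ ≃ ℕ × ℕ) :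
    IsMPartition fun j => A (e j).1 ∩ B (e j).1 (e j).2 where
  meas j := (hA.meas _).inter ((hB _).meas _)
  disj i j hij := by
    by_cases h₁ : (e i).1 = (e j).1
    · have h₂ : (e i).2 ≠ (e j).2 := fun h₂ => hij (e.injective (Prod.ext h₁ h₂))
      have hBij := (hB (e j).1).disj h₂
      simp only [Function.onFun, h₁] at hBij ⊢
      exact hBij.mono Set.inter_subset_right Set.inter_subset_right
    · exact (hA.disj h₁).mono Set.inter_subset_left Set.inter_subset_left
  cover := by
    refine Set.eq_univ_of_forall fun ω => ?_
    obtain ⟨n, hn⟩ := Set.mem_iUnion.1 (hA.cover ▸ Set.mem_univ ω)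
    obtain ⟨k, hk⟩ := Set.mem_iUnion.1 ((hB n).cover ▸ Set.mem_univ ω)
    exact Set.mem_iUnion.2 ⟨e.symm (n, k), by simp [hn, hk]⟩

end RNM

open MeasureTheory RNM in
theorem Hcc_hasCCP_general {Ω : Type} [MeasurableSpace Ω] {P : Measure Ω}
    {E : Type*} [AddCommGroup E] [Module (Ω →ₘ[P] ℂ) E]
    (hE : HasCCP P E) (M : Set E) : SetCCP (P := P) (Hcc (P := P) M) := by
  intro A hA x hx
  choose B hB m hmM hxm using hx
  obtain ⟨x₀, hx₀⟩ := hE A hA x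
  let e : ℕ ≃ ℕ × ℕ := Nat.pairEquiv.symm
  refine ⟨x₀, ⟨_, hA.refine hB e, fun j => m (e j).1 (e j).2, fun j => hmM _ _, ?_⟩, hx₀⟩
  exact fun j => indC_inter_smul_eq _ _ (hx₀ _) (hxm _ _)

open MeasureTheory RNM in
/-- If a left `L⁰(𝓕,ℂ)`-module `E` has the countable concatenation property, then the
countable concatenation hull `H_cc(M)` of any subset `M ⊆ E` has the countable
concatenation property. -/
theorem Hcc_hasCCP {Ω : Type} [MeasurableSpace Ω] {P : Measure Ω}
    [IsProbabilityMeasure P] {E : Type*} [AddCommGroup E] [Module (Ω →ₘ[P] ℂ) E]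
    (hE : HasCCP P E) (M : Set E) : SetCCP (P := P) (Hcc (P := P) M) :=
  Hcc_hasCCP_general hE M
end

section
/- Let (E,‖·‖) be a random normed module over ℝ with base (Ω,𝓕,P), and let G, M be nonempty L⁰-convex subsets of E with the countable concatenation property such that the interior G° of G in the locally L⁰-convex topology is nonempty and G ∩ M = ∅. Then there exists a P-a.e. bounded random linear functional f ∈ E* such that f(x) ≤ f(y) holds a.e. on the hereditarily disjoint stratification H(G,M) for all x ∈ G and y ∈ M, and f(x) < f(y) a.e. on H(G,M) for all x ∈ G° and y ∈ M. -/
open MeasureTheory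

namespace RNM

variable {Ω : Type} [MeasurableSpace Ω] {P : Measure Ω}

/-- pointwise absolute value on `L⁰(𝓕,ℝ)`. -/
noncomputable def absR (ξ : Ω →ₘ[P] ℝ) : Ω →ₘ[P] ℝ := ξ.comp (fun r => |r|) continuous_abs

variable {E : Type*} [AddCommGroup E] [Module (Ω →ₘ[P] ℝ) E]

/-- the random-norm axioms for an `RN` module over `ℝ`. -/
structure IsRNNormR (nrm : E → Ω →ₘ[P] ℝ) : Prop where
  nonneg : ∀ x, 0 ≤ nrm x
  eq_zero_iff : ∀ x, nrm x = 0 ↔ x = 0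
  smul_eq : ∀ (ξ : Ω →ₘ[P] ℝ) (x : E), nrm (ξ • x) = absR ξ * nrm x
  add_le : ∀ x y, nrm (x + y) ≤ nrm x + nrm y

/-- `L⁰`-convexity of a subset of an `L⁰(𝓕,ℝ)`-module. -/
def L0ConvexR (S : Set E) : Prop :=
  ∀ x ∈ S, ∀ y ∈ S, ∀ ξ : Ω →ₘ[P] ℝ, 0 ≤ ξ → ξ ≤ 1 → ξ • x + (1 - ξ) • y ∈ S

/-- the countable concatenation property for a subset of an `L⁰(𝓕,ℝ)`-module. -/
def SetCCPR (S : Set E) : Prop :=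
  ∀ (A : ℕ → Set Ω) (hA : IsMPartition A) (x : ℕ → E), (∀ n, x n ∈ S) →
    ∃ x0 ∈ S, ∀ n, indR (P := P) (A n) (hA.meas n) • x0 = indR (P := P) (A n) (hA.meas n) • x n

/-- the set of `P`-a.e. bounded random linear functionals on an `RN` module over `ℝ`:
the random conjugate space `E*`. -/
def BddR (nrm : E → Ω →ₘ[P] ℝ) : Set (E →ₗ[Ω →ₘ[P] ℝ] (Ω →ₘ[P] ℝ)) :=
  {f | ∃ ξ : Ω →ₘ[P] ℝ, 0 ≤ ξ ∧ ∀ x, absR (f x) ≤ ξ * nrm x}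

/-- `H` is the hereditarily disjoint stratification `H(G,M)` of `G` and `M`: on every
positive-measure measurable subset of `H` the strata of `G` and `M` are disjoint, and `H`
is the largest such measurable set up to null sets. -/
def DisjStratR (G M : Set E) (H : Set Ω) : Prop :=
  MeasurableSet H ∧
  (∀ (B : Set Ω) (hB : MeasurableSet B), B ⊆ H → 0 < P B →
    ∀ x ∈ G, ∀ y ∈ M, indR (P := P) B hB • x ≠ indR (P := P) B hB • y) ∧
  ∀ H' : Set Ω, MeasurableSet H' →
    (∀ (B : Set Ω) (hB : MeasurableSet B), B ⊆ H' → 0 < P B →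
      ∀ x ∈ G, ∀ y ∈ M, indR (P := P) B hB • x ≠ indR (P := P) B hB • y) →
    P (H' \ H) = 0

/-- the gauge function `p_B` of an `L⁰`-absorbent set `B`:
`p_B(x) = ⋀{ξ ∈ L⁰₊₊ : x ∈ ξ B}` (the lattice infimum, when it exists). -/
noncomputable def gaugeR (B : Set E) (x : E) : Ω →ₘ[P] ℝ := by
  classical
  exact if h : ∃ s : Ω →ₘ[P] ℝ, IsGLB {ξ : Ω →ₘ[P] ℝ | L0pos ξ ∧ ∃ b ∈ B, x = ξ • b} s
    then h.choose else 0

end RNM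


/-!
Fix an interior point `x₀` of `G` and `m₀ ∈ M`, and put `z₀ = m₀ - x₀`. The set
`C = z₀ + (G - M)` is `L⁰`-convex and contains a ball `‖w‖ < ε₀` around `0`, so its gauge `p_C`
(which exists because `L⁰` is Dedekind complete) is `L⁰`-sublinear and `p_C ≤ ε₀⁻¹ ‖·‖`.
If `z₀ = ξ c` with `c ∈ C` and `ξ < 1` on a non-null part `B` of `H(G,M)`, then a convex
combination of points of `G` agrees with one of points of `M` on `B`; hence `p_C(z₀) ≥ 1` on
`H(G,M)`. The random Hahn–Banach theorem extends `z₀ ↦ Ĩ_H` to a functional `f ≤ p_C`, which is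
therefore a.e. bounded, and `f x - f y + Ĩ_H = f (z₀ + (x - y)) ≤ 1` for `x ∈ G`, `y ∈ M` is the
separation on `H(G,M)`. For `x` interior, `x + ξ z₀ ∈ G` for some `ξ ∈ L⁰₊₊`, which makes it strict.

Dedekind completeness of `L⁰` comes from maximising `∫ arctan` over the suprema of countable
subsets.
-/

namespace RNM

open MeasureTheory Filter Real

variable {Ω : Type} [MeasurableSpace Ω] {P : Measure Ω}

section L0

instance : IsOrderedRing (Ω →ₘ[P] ℝ) where
  add_le_add_left a b hab c := le_of_ae <| by
    filter_upwards [le_ae hab, add_ae a c, add_ae b c] with ω h h₁ h₂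
    rw [h₁, h₂]; linarith
  zero_le_one := le_of_ae <| by
    filter_upwards [zero_ae (P := P) ℝ, one_ae (P := P) ℝ] with ω h₀ h₁
    rw [h₀, h₁]; exact zero_le_one
  mul_le_mul_of_nonneg_left c hc a b hab := le_of_ae <| by
    filter_upwards [le_ae hab, le_ae hc, mul_ae c a, mul_ae c b, zero_ae (P := P) ℝ]
      with ω h h₀ h₁ h₂ hz
    rw [h₁, h₂]; rw [hz] at h₀; exact mul_le_mul_of_nonneg_left h h₀
  mul_le_mul_of_nonneg_right c hc a b hab := le_of_ae <| by
    filter_upwards [le_ae hab, le_ae hc, mul_ae a c, mul_ae b c, zero_ae (P := P) ℝ]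
      with ω h h₀ h₁ h₂ hz
    rw [h₁, h₂]; rw [hz] at h₀; exact mul_le_mul_of_nonneg_right h h₀

lemma L0pos_one : L0pos (1 : Ω →ₘ[P] ℝ) := by
  filter_upwards [one_ae (P := P) ℝ] with ω h
  rw [h]; exact one_pos

lemma L0pos_const {δ : ℝ} (hδ : 0 < δ) : L0pos (AEEqFun.const Ω δ : Ω →ₘ[P] ℝ) := by
  filter_upwards [AEEqFun.coeFn_const Ω δ] with ω h
  rw [h]; exact hδ

lemma L0pos.nonneg {ξ : Ω →ₘ[P] ℝ} (h : L0pos ξ) : 0 ≤ ξ := le_of_ae <| by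
  filter_upwards [h, zero_ae (P := P) ℝ] with ω h₁ h₂
  rw [h₂]; exact h₁.le

lemma L0pos.add_nonneg {ξ η : Ω →ₘ[P] ℝ} (hξ : L0pos ξ) (hη : 0 ≤ η) : L0pos (ξ + η) := by
  filter_upwards [hξ, le_ae hη, add_ae ξ η, zero_ae (P := P) ℝ] with ω h₁ h₂ h₃ h₀
  rw [h₃]; rw [h₀] at h₂; linarith

lemma L0pos.mul {ξ η : Ω →ₘ[P] ℝ} (hξ : L0pos ξ) (hη : L0pos η) : L0pos (ξ * η) := by
  filter_upwards [hξ, hη, mul_ae ξ η] with ω h₁ h₂ h₃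
  rw [h₃]; exact mul_pos h₁ h₂

/-- Pointwise inverse, with `0⁻¹ = 0` as in `ℝ`. -/
noncomputable def L0inv (ξ : Ω →ₘ[P] ℝ) : Ω →ₘ[P] ℝ :=
  ξ.compMeasurable (·⁻¹) measurable_inv

lemma coeFn_L0inv (ξ : Ω →ₘ[P] ℝ) : ∀ᵐ ω ∂P, L0inv ξ ω = (ξ ω)⁻¹ :=
  AEEqFun.coeFn_compMeasurable _ _ ξ

lemma L0pos_L0inv {ξ : Ω →ₘ[P] ℝ} (h : L0pos ξ) : L0pos (L0inv ξ) := by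
  filter_upwards [h, coeFn_L0inv ξ] with ω h₁ h₂
  rw [h₂]; exact inv_pos.2 h₁

lemma L0pos.mul_L0inv {ξ : Ω →ₘ[P] ℝ} (h : L0pos ξ) : ξ * L0inv ξ = 1 := AEEqFun.ext <| by
  filter_upwards [h, coeFn_L0inv ξ, mul_ae ξ (L0inv ξ), one_ae (P := P) ℝ] with ω h₁ h₂ h₃ h₄
  rw [h₃, h₂, h₄, mul_inv_cancel₀ h₁.ne']

lemma L0pos.L0inv_mul {ξ : Ω →ₘ[P] ℝ} (h : L0pos ξ) : L0inv ξ * ξ = 1 := by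
  rw [mul_comm, h.mul_L0inv]

lemma le_of_forall_le_add_const {ξ η : Ω →ₘ[P] ℝ}
    (h : ∀ δ : ℝ, 0 < δ → ξ ≤ η + AEEqFun.const Ω δ) : ξ ≤ η := by
  have hn : ∀ᵐ ω ∂P, ∀ n : ℕ, ξ ω ≤ η ω + 1 / (n + 1) := by
    rw [ae_all_iff]
    intro n
    filter_upwards [le_ae (h _ Nat.one_div_pos_of_nat), add_ae η (AEEqFun.const Ω _),
      AEEqFun.coeFn_const Ω (1 / (n + 1 : ℝ))] with ω h₁ h₂ h₃
    rwa [h₂, h₃] at h₁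
  refine le_of_ae ?_
  filter_upwards [hn] with ω hω
  by_contra hlt
  obtain ⟨n, hn⟩ := exists_nat_one_div_lt (sub_pos.2 (not_le.1 hlt))
  linarith [hω n]

lemma coeFn_absR (ξ : Ω →ₘ[P] ℝ) : ∀ᵐ ω ∂P, absR ξ ω = |ξ ω| :=
  AEEqFun.coeFn_comp _ _ ξ

lemma absR_of_nonneg {ξ : Ω →ₘ[P] ℝ} (h : 0 ≤ ξ) : absR ξ = ξ := AEEqFun.ext <| by
  filter_upwards [coeFn_absR ξ, le_ae h, zero_ae (P := P) ℝ] with ω h₁ h₂ h₀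
  rw [h₁, abs_of_nonneg (h₀ ▸ h₂)]

lemma absR_neg (ξ : Ω →ₘ[P] ℝ) : absR (-ξ) = absR ξ := AEEqFun.ext <| by
  filter_upwards [coeFn_absR ξ, coeFn_absR (-ξ), AEEqFun.coeFn_neg ξ] with ω h₁ h₂ h₃
  rw [h₁, h₂, h₃, Pi.neg_apply, abs_neg]

end L0

section Indicator

variable {A : Set Ω} (hA : MeasurableSet A)

lemma coeFn_indR_of_mem : ∀ᵐ ω ∂P, ω ∈ A → indR (P := P) A hA ω = 1 := by
  filter_upwards [AEEqFun.coeFn_mk (μ := P) (A.indicator fun _ => (1 : ℝ)) _] with ω h hω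
  rw [indR, h, Set.indicator_of_mem hω]

lemma coeFn_indR_of_notMem : ∀ᵐ ω ∂P, ω ∉ A → indR (P := P) A hA ω = 0 := by
  filter_upwards [AEEqFun.coeFn_mk (μ := P) (A.indicator fun _ => (1 : ℝ)) _] with ω h hω
  rw [indR, h, Set.indicator_of_notMem hω]

lemma indR_mul_self : indR (P := P) A hA * indR A hA = indR A hA := AEEqFun.ext <| by
  filter_upwards [mul_ae (indR (P := P) A hA) (indR A hA), coeFn_indR_of_mem hA,
    coeFn_indR_of_notMem hA] with ω h h₁ h₀
  by_cases hω : ω ∈ A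
  · rw [h, h₁ hω, mul_one]
  · rw [h, h₀ hω, mul_zero]

lemma indR_nonneg : 0 ≤ indR (P := P) A hA := le_of_ae <| by
  filter_upwards [coeFn_indR_of_mem hA, coeFn_indR_of_notMem hA, zero_ae (P := P) ℝ]
    with ω h₁ h₀ hz
  by_cases hω : ω ∈ A
  · rw [h₁ hω, hz]; exact zero_le_one
  · rw [h₀ hω, hz]

lemma indR_le_one : indR (P := P) A hA ≤ 1 := le_of_ae <| by
  filter_upwards [coeFn_indR_of_mem hA, coeFn_indR_of_notMem hA, one_ae (P := P) ℝ]
    with ω h₁ h₀ h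
  by_cases hω : ω ∈ A
  · rw [h₁ hω, h]
  · rw [h₀ hω, h]; exact zero_le_one

lemma indR_mul_eq_of_ae_eq_on {ξ η : Ω →ₘ[P] ℝ} (h : ∀ᵐ ω ∂P, ω ∈ A → ξ ω = η ω) :
    indR A hA * ξ = indR A hA * η := AEEqFun.ext <| by
  filter_upwards [h, mul_ae (indR A hA) ξ, mul_ae (indR A hA) η, coeFn_indR_of_notMem hA]
    with ω h h₁ h₂ h₀
  rw [h₁, h₂]
  by_cases hω : ω ∈ A
  · rw [h hω]
  · rw [h₀ hω, zero_mul, zero_mul]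

variable (A) in
noncomputable def piecewise (ξ η : Ω →ₘ[P] ℝ) : Ω →ₘ[P] ℝ :=
  indR A hA * ξ + (1 - indR A hA) * η

variable (ξ η : Ω →ₘ[P] ℝ)

lemma coeFn_piecewise_of_mem : ∀ᵐ ω ∂P, ω ∈ A → piecewise A hA ξ η ω = ξ ω := by
  filter_upwards [add_ae (indR A hA * ξ) ((1 - indR A hA) * η), mul_ae (indR A hA) ξ,
    mul_ae (1 - indR A hA) η, sub_ae 1 (indR (P := P) A hA), one_ae (P := P) ℝ,
    coeFn_indR_of_mem hA] with ω h h₁ h₂ h₃ h₄ h₅ hω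
  rw [piecewise, h, h₁, h₂, h₃, h₄, h₅ hω]; ring

lemma coeFn_piecewise_of_notMem : ∀ᵐ ω ∂P, ω ∉ A → piecewise A hA ξ η ω = η ω := by
  filter_upwards [add_ae (indR A hA * ξ) ((1 - indR A hA) * η), mul_ae (indR A hA) ξ,
    mul_ae (1 - indR A hA) η, sub_ae 1 (indR (P := P) A hA), one_ae (P := P) ℝ,
    coeFn_indR_of_notMem hA] with ω h h₁ h₂ h₃ h₄ h₅ hω
  rw [piecewise, h, h₁, h₂, h₃, h₄, h₅ hω]; ring

lemma indR_mul_piecewise : indR A hA * piecewise A hA ξ η = indR A hA * ξ := by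
  unfold piecewise
  linear_combination (ξ - η) * indR_mul_self hA

lemma one_sub_indR_mul_piecewise :
    (1 - indR A hA) * piecewise A hA ξ η = (1 - indR A hA) * η := by
  unfold piecewise
  linear_combination (η - ξ) * indR_mul_self hA

lemma L0pos_piecewise {ξ η : Ω →ₘ[P] ℝ} (hξ : ∀ᵐ ω ∂P, ω ∈ A → 0 < ξ ω) (hη : L0pos η) :
    L0pos (piecewise A hA ξ η) := by
  filter_upwards [hξ, hη, coeFn_piecewise_of_mem hA ξ η, coeFn_piecewise_of_notMem hA ξ η]
    with ω h₁ h₂ e₁ e₂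
  by_cases hω : ω ∈ A
  · rw [e₁ hω]; exact h₁ hω
  · rw [e₂ hω]; exact h₂

lemma piecewise_smul_add {E : Type*} [AddCommGroup E] [Module (Ω →ₘ[P] ℝ) E] (x y : E) :
    piecewise A hA ξ η • (indR (P := P) A hA • x + (1 - indR (P := P) A hA) • y) =
      indR (P := P) A hA • (ξ • x) + (1 - indR (P := P) A hA) • (η • y) := by
  rw [smul_add, smul_smul, smul_smul, mul_comm, indR_mul_piecewise, mul_comm (piecewise _ _ _ _),
    one_sub_indR_mul_piecewise, mul_smul, mul_smul]

lemma ae_le_on_of_isGLB {A : Set Ω} (hA : MeasurableSet A) {S : Set (Ω →ₘ[P] ℝ)}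
    {s t : Ω →ₘ[P] ℝ} (hs : IsGLB S s) (h : ∀ ξ ∈ S, ∀ᵐ ω ∂P, ω ∈ A → t ω ≤ ξ ω) :
    ∀ᵐ ω ∂P, ω ∈ A → t ω ≤ s ω := by
  have hlow : piecewise A hA t s ≤ s := hs.2 fun ξ hξ => le_of_ae <| by
    filter_upwards [h ξ hξ, le_ae (hs.1 hξ), coeFn_piecewise_of_mem hA t s,
      coeFn_piecewise_of_notMem hA t s] with ω h₁ h₂ e₁ e₂
    by_cases hω : ω ∈ A
    · rw [e₁ hω]; exact h₁ hω
    · rw [e₂ hω]; exact h₂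
  filter_upwards [le_ae hlow, coeFn_piecewise_of_mem hA t s] with ω h₁ h₂ hω
  rw [← h₂ hω]; exact h₁

end Indicator

section Completeness

lemma exists_isLUB_of_countable {S : Set (Ω →ₘ[P] ℝ)} (hc : S.Countable) (hne : S.Nonempty)
    (hbdd : BddAbove S) : ∃ g, IsLUB S g := by
  obtain ⟨u, rfl⟩ := hc.exists_eq_range hne
  obtain ⟨b, hb⟩ := hbdd
  have hub : ∀ z ∈ upperBounds (Set.range u), ∀ᵐ ω ∂P, ∀ n, u n ω ≤ z ω := fun z hz =>
    ae_all_iff.2 fun n => le_ae (hz ⟨n, rfl⟩)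
  have hmeas : Measurable fun ω => ⨆ n, u n ω := Measurable.iSup fun n => (u n).measurable
  refine ⟨AEEqFun.mk _ hmeas.aestronglyMeasurable, ?_, fun z hz => le_of_ae ?_⟩
  · rintro - ⟨n, rfl⟩
    refine le_of_ae ?_
    filter_upwards [hub b hb, AEEqFun.coeFn_mk _ hmeas.aestronglyMeasurable] with ω hω h
    rw [h]
    exact le_ciSup ⟨b ω, Set.forall_mem_range.2 hω⟩ n
  · filter_upwards [hub z hz, AEEqFun.coeFn_mk _ hmeas.aestronglyMeasurable] with ω hω h
    rw [h]
    exact ciSup_le hω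

variable [IsFiniteMeasure P]

lemma integrable_arctan (ξ : Ω →ₘ[P] ℝ) : Integrable (fun ω => arctan (ξ ω)) P :=
  (integrable_const (π / 2)).mono'
    (continuous_arctan.measurable.comp ξ.measurable).aestronglyMeasurable
    (Eventually.of_forall fun _ => abs_le.2
      ⟨(neg_pi_div_two_lt_arctan _).le, (arctan_lt_pi_div_two _).le⟩)

lemma integral_arctan_mono {ξ η : Ω →ₘ[P] ℝ} (h : ξ ≤ η) :
    ∫ ω, arctan (ξ ω) ∂P ≤ ∫ ω, arctan (η ω) ∂P :=
  integral_mono_ae (integrable_arctan ξ) (integrable_arctan η) <| by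
    filter_upwards [le_ae h] with ω hω using arctan_strictMono.monotone hω

lemma integral_arctan_le (ξ : Ω →ₘ[P] ℝ) : ∫ ω, arctan (ξ ω) ∂P ≤ ∫ _, π / 2 ∂P :=
  integral_mono (integrable_arctan ξ) (integrable_const _) fun _ => (arctan_lt_pi_div_two _).le

lemma le_of_le_of_integral_arctan_le {ξ η : Ω →ₘ[P] ℝ} (h : ξ ≤ η)
    (hint : ∫ ω, arctan (η ω) ∂P ≤ ∫ ω, arctan (ξ ω) ∂P) : η ≤ ξ := by
  have hnonneg : 0 ≤ᵐ[P] fun ω => arctan (η ω) - arctan (ξ ω) := by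
    filter_upwards [le_ae h] with ω hω using sub_nonneg.2 (arctan_strictMono.monotone hω)
  have hzero : ∫ ω, arctan (η ω) - arctan (ξ ω) ∂P = 0 := by
    rw [integral_sub (integrable_arctan η) (integrable_arctan ξ)]
    linarith [integral_arctan_mono h]
  refine le_of_ae ?_
  filter_upwards [(integral_eq_zero_iff_of_nonneg_ae hnonneg
    ((integrable_arctan η).sub (integrable_arctan ξ))).1 hzero] with ω hω
  exact (arctan_injective (sub_eq_zero.1 hω)).le

theorem exists_isLUB {S : Set (Ω →ₘ[P] ℝ)} (hne : S.Nonempty) (hbdd : BddAbove S) :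
    ∃ g, IsLUB S g := by
  have hlub : ∀ T ⊆ S, T.Countable → T.Nonempty → ∃ g, IsLUB T g := fun T hTS hc hT =>
    exists_isLUB_of_countable hc hT (hbdd.mono hTS)
  set 𝒢 : Set (Ω →ₘ[P] ℝ) := {g | ∃ T ⊆ S, T.Countable ∧ T.Nonempty ∧ IsLUB T g}
  set J : (Ω →ₘ[P] ℝ) → ℝ := fun ξ => ∫ ω, arctan (ξ ω) ∂P
  obtain ⟨s₀, hs₀⟩ := hne
  obtain ⟨g₀, hg₀⟩ := hlub {s₀} (Set.singleton_subset_iff.2 hs₀) (Set.countable_singleton s₀)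
    (Set.singleton_nonempty s₀)
  have hJbdd : BddAbove (J '' 𝒢) := by
    refine ⟨∫ _, π / 2 ∂P, ?_⟩
    rintro - ⟨g, -, rfl⟩
    exact integral_arctan_le g
  have hJne : (J '' 𝒢).Nonempty := ⟨J g₀, g₀, ⟨{s₀}, Set.singleton_subset_iff.2 hs₀,
    Set.countable_singleton s₀, Set.singleton_nonempty s₀, hg₀⟩, rfl⟩
  obtain ⟨a, -, ha, haJ⟩ := exists_seq_tendsto_sSup hJne hJbdd
  choose g hg hga using haJ
  choose T hTS hTc hTne hTg using hg
  have hUS : (⋃ n, T n) ⊆ S := Set.iUnion_subset hTS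
  have hUc : (⋃ n, T n).Countable := Set.countable_iUnion hTc
  obtain ⟨gmax, hgmax⟩ := hlub _ hUS hUc ((hTne 0).mono (Set.subset_iUnion T 0))
  -- `gmax` maximizes `J` over the least upper bounds of countable subsets of `S`
  have hJ : ∀ h ∈ 𝒢, J h ≤ J gmax := fun h hh =>
    (le_csSup hJbdd ⟨h, hh, rfl⟩).trans <| le_of_tendsto' ha fun n => by
      rw [← hga n]; exact integral_arctan_mono ((hTg n).mono hgmax (Set.subset_iUnion T n))
  refine ⟨gmax, fun f hf => ?_, fun z hz => hgmax.2 fun y hy => hz (hUS hy)⟩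
  obtain ⟨h, hh⟩ := hlub _ (Set.insert_subset hf hUS) (hUc.insert f) (Set.insert_nonempty _ _)
  have hle : gmax ≤ h := hgmax.mono hh (Set.subset_insert _ _)
  exact (hh.1 (Set.mem_insert _ _)).trans <| le_of_le_of_integral_arctan_le hle <|
    hJ h ⟨_, Set.insert_subset hf hUS, hUc.insert f, Set.insert_nonempty _ _, hh⟩

theorem exists_isGLB {S : Set (Ω →ₘ[P] ℝ)} (hne : S.Nonempty) (hbdd : BddBelow S) :
    ∃ g, IsGLB S g := by
  obtain ⟨g, hg⟩ := exists_isLUB hne.neg (bddAbove_neg.2 hbdd)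
  exact ⟨-g, isLUB_neg.1 (by simpa using hg)⟩

end Completeness

lemma LinearPMap.sSup_apply_le {R E F : Type*} [Ring R] [AddCommGroup E] [Module R E]
    [AddCommGroup F] [Module R F] [Preorder F] {p : E → F} {c : Set (E →ₗ.[R] F)}
    (hne : c.Nonempty) (hc : DirectedOn (· ≤ ·) c) (hcp : ∀ g ∈ c, ∀ b : g.domain, g b ≤ p b)
    (b : (LinearPMap.sSup c hc).domain) : LinearPMap.sSup c hc b ≤ p b := by
  obtain ⟨g, hg, hb⟩ := (LinearPMap.mem_domain_sSup_iff hne hc).1 b.2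
  rw [← (LinearPMap.le_sSup hc hg).2 (x := ⟨b, hb⟩) rfl]
  exact hcp g hg _

section HahnBanach

variable {E : Type*} [AddCommGroup E] [Module (Ω →ₘ[P] ℝ) E]

/-- `L⁰`-sublinearity with homogeneity required only for `ξ ∈ L⁰₊₊`; locality, which homogeneity
for all `ξ ≥ 0` would give, is therefore a separate axiom. -/
structure IsL0Sublinear (p : E → Ω →ₘ[P] ℝ) : Prop where
  add_le : ∀ x y, p (x + y) ≤ p x + p y
  smul_of_L0pos : ∀ ξ, L0pos ξ → ∀ x, p (ξ • x) = ξ * p x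
  ae_eq_on : ∀ (A : Set Ω) (hA : MeasurableSet A) (x y : E),
    indR (P := P) A hA • x = indR (P := P) A hA • y → ∀ᵐ ω ∂P, ω ∈ A → p x ω = p y ω

namespace IsL0Sublinear

variable {p : E → Ω →ₘ[P] ℝ} (hp : IsL0Sublinear p)
include hp

lemma map_zero : p 0 = 0 := by
  have h := hp.smul_of_L0pos _ (L0pos_one.add_nonneg zero_le_one) 0
  rw [smul_zero, add_mul, one_mul] at h
  exact left_eq_add.1 h

variable {f : E →ₗ.[Ω →ₘ[P] ℝ] Ω →ₘ[P] ℝ} {x : E} {c : Ω →ₘ[P] ℝ}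

lemma add_mul_le_of_L0pos (hplus : ∀ a : f.domain, f a + c ≤ p (a + x)) (a : f.domain)
    {η : Ω →ₘ[P] ℝ} (hη : L0pos η) : f a + η * c ≤ p (a + η • x) := by
  have key := mul_le_mul_of_nonneg_left (hplus (L0inv η • a)) hη.nonneg
  rwa [← hp.smul_of_L0pos η hη, LinearPMap.map_smul, smul_eq_mul, mul_add, ← mul_assoc,
    hη.mul_L0inv, one_mul, Submodule.coe_smul, smul_add, smul_smul, hη.mul_L0inv,
    one_smul] at key

lemma ae_add_mul_le_of_pos (hplus : ∀ a : f.domain, f a + c ≤ p (a + x)) (a : f.domain)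
    (ξ : Ω →ₘ[P] ℝ) : ∀ᵐ ω ∂P, 0 < ξ ω → (f a + ξ * c) ω ≤ p (a + ξ • x) ω := by
  set A := {ω | 0 < ξ ω}
  have hA : MeasurableSet A := measurableSet_lt measurable_const ξ.measurable
  set η := piecewise A hA ξ 1
  have hηξ : ∀ᵐ ω ∂P, ω ∈ A → η ω = ξ ω := coeFn_piecewise_of_mem hA ξ 1
  have hAη : indR (P := P) A hA • ((a : E) + η • x) = indR (P := P) A hA • ((a : E) + ξ • x) := by
    rw [smul_add, smul_add, smul_smul, smul_smul, indR_mul_piecewise]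
  have hη : L0pos η := L0pos_piecewise hA (Eventually.of_forall fun _ hω => hω) L0pos_one
  filter_upwards [le_ae (hp.add_mul_le_of_L0pos hplus a hη),
    hp.ae_eq_on A hA _ _ hAη, hηξ, add_ae (f a) (η * c), add_ae (f a) (ξ * c),
    mul_ae η c, mul_ae ξ c] with ω h he hηω h₁ h₂ h₃ h₄ hω
  rw [h₁, h₃, hηω hω] at h
  rw [h₂, h₄, ← he hω]
  exact h

lemma ae_add_mul_le_of_eq_zero (hf : ∀ a : f.domain, f a ≤ p a) (a : f.domain)
    (ξ : Ω →ₘ[P] ℝ) : ∀ᵐ ω ∂P, ξ ω = 0 → (f a + ξ * c) ω ≤ p (a + ξ • x) ω := by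
  set A := {ω | ξ ω = 0}
  have hA : MeasurableSet A := ξ.measurable (measurableSet_singleton 0)
  have hAξ : indR A hA * ξ = indR A hA * 0 := indR_mul_eq_of_ae_eq_on hA <| by
    filter_upwards [zero_ae (P := P) ℝ] with ω h₀ hω
    rw [h₀]; exact hω
  have hAa : indR (P := P) A hA • ((a : E) + ξ • x) = indR (P := P) A hA • (a : E) := by
    rw [smul_add, smul_smul, hAξ, mul_zero, zero_smul, add_zero]
  filter_upwards [le_ae (hf a), hp.ae_eq_on A hA _ _ hAa, add_ae (f a) (ξ * c), mul_ae ξ c]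
    with ω h he h₁ h₂ hω
  rw [h₁, h₂, hω, zero_mul, add_zero, he hω]
  exact h

/-- Locality of `p` lets the cases `ξ = ±1` extend to all `ξ ∈ L⁰`: split `Ω` according to the
sign of `ξ`. -/
lemma add_mul_le (hf : ∀ a : f.domain, f a ≤ p a) (hplus : ∀ a : f.domain, f a + c ≤ p (a + x))
    (hminus : ∀ a : f.domain, f a - c ≤ p (a - x)) (a : f.domain) (ξ : Ω →ₘ[P] ℝ) :
    f a + ξ * c ≤ p (a + ξ • x) := by
  have hminus' : ∀ a : f.domain, f a + -c ≤ p (a + -x) := fun a => by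
    simpa only [← sub_eq_add_neg] using hminus a
  have hneg := hp.ae_add_mul_le_of_pos hminus' a (-ξ)
  rw [neg_mul_neg, neg_smul_neg] at hneg
  refine le_of_ae ?_
  filter_upwards [hp.ae_add_mul_le_of_pos hplus a ξ, hneg, hp.ae_add_mul_le_of_eq_zero hf a ξ,
    AEEqFun.coeFn_neg ξ] with ω hpos hneg hzero hω
  rcases lt_trichotomy (ξ ω) 0 with h | h | h
  · exact hneg (by rw [hω, Pi.neg_apply]; exact neg_pos.2 h)
  · exact hzero h
  · exact hpos h

lemma exists_add_le_and_sub_le [IsFiniteMeasure P] (hf : ∀ a : f.domain, f a ≤ p a) (x : E) :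
    ∃ c, (∀ a : f.domain, f a + c ≤ p (a + x)) ∧ ∀ a : f.domain, f a - c ≤ p (a - x) := by
  have hL : ∀ a b : f.domain, f a - p (a - x) ≤ p (b + x) - f b := by
    intro a b
    rw [sub_le_sub_iff, add_comm (p _), ← f.map_add]
    calc f (a + b) ≤ p (a + b : E) := hf _
      _ = p ((a - x) + (b + x)) := by rw [sub_add_add_cancel]
      _ ≤ p (a - x) + p (b + x) := hp.add_le _ _
  obtain ⟨c, hc⟩ := exists_isLUB (Set.range_nonempty fun a : f.domain => f a - p (a - x))
    ⟨p ((0 : f.domain) + x) - f 0, Set.forall_mem_range.2 fun a => hL a 0⟩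
  refine ⟨c, fun b => ?_, fun a => ?_⟩
  · exact le_sub_iff_add_le'.1 (hc.2 (Set.forall_mem_range.2 fun a => hL a b))
  · exact sub_le_comm.1 (hc.1 ⟨a, rfl⟩)

lemma apply_eq_mul_of_coe_eq_smul (hK : ∀ (a : f.domain) ξ, f a + ξ * c ≤ p (a + ξ • x))
    {a : f.domain} {ξ : Ω →ₘ[P] ℝ} (ha : (a : E) = ξ • x) : f a = ξ * c := by
  apply le_antisymm
  · have h := hK a (-ξ)
    rwa [neg_smul, ← sub_eq_add_neg, ha, sub_self, hp.map_zero, neg_mul, ← sub_eq_add_neg,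
      sub_nonpos] at h
  · have h := hK (-a) ξ
    rwa [Submodule.coe_neg, ha, neg_add_cancel, hp.map_zero, LinearPMap.map_neg,
      neg_add_nonpos_iff] at h

lemma exists_extension_apply_eq (hK : ∀ (a : f.domain) ξ, f a + ξ * c ≤ p (a + ξ • x)) :
    ∃ g : E →ₗ.[Ω →ₘ[P] ℝ] Ω →ₘ[P] ℝ, f ≤ g ∧ (∀ b : g.domain, g b ≤ p b) ∧
      ∃ hx : x ∈ g.domain, g ⟨x, hx⟩ = c := by
  have hval : ∀ (a : f.domain) ξ, (a : E) = ξ • x → f a = ξ * c := fun _ _ ha =>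
    hp.apply_eq_mul_of_coe_eq_smul hK ha
  set s : E →ₗ.[Ω →ₘ[P] ℝ] Ω →ₘ[P] ℝ := LinearPMap.mkSpanSingleton' x c fun ξ hξ => by
    simpa using (hval 0 ξ hξ.symm).symm
  have hs : ∀ ξ (h : ξ • x ∈ s.domain), s ⟨ξ • x, h⟩ = ξ * c := fun ξ h =>
    LinearPMap.mkSpanSingleton'_apply x c _ ξ h
  have hcompat : ∀ (a : f.domain) (b : s.domain), (a : E) = b → f a = s b := by
    rintro a ⟨b, hb⟩ hab
    obtain ⟨ξ, rfl⟩ := Submodule.mem_span_singleton.1 hb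
    rw [hs]
    exact hval a ξ hab
  have hxs : x ∈ s.domain := Submodule.mem_span_singleton_self x
  refine ⟨f.sup s hcompat, f.left_le_sup s hcompat, ?_, (f.right_le_sup s hcompat).1 hxs, ?_⟩
  · rintro ⟨b, hb⟩
    obtain ⟨a, ha, _, hy, rfl⟩ := Submodule.mem_sup.1 hb
    obtain ⟨ξ, rfl⟩ := Submodule.mem_span_singleton.1 hy
    refine (LinearPMap.sup_apply hcompat ⟨a, ha⟩ ⟨ξ • x, hy⟩ ⟨_, hb⟩ rfl).trans_le ?_
    rw [hs]
    exact hK ⟨a, ha⟩ ξ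
  · rw [← (f.right_le_sup s hcompat).2 (x := ⟨x, hxs⟩) rfl]
    exact LinearPMap.mkSpanSingleton'_apply_self x c _ hxs

theorem exists_linearMap_extension [IsFiniteMeasure P] (f : E →ₗ.[Ω →ₘ[P] ℝ] Ω →ₘ[P] ℝ)
    (hf : ∀ a : f.domain, f a ≤ p a) :
    ∃ F : E →ₗ[Ω →ₘ[P] ℝ] Ω →ₘ[P] ℝ, (∀ x, F x ≤ p x) ∧ ∀ a : f.domain, F a = f a := by
  set S := {g : E →ₗ.[Ω →ₘ[P] ℝ] Ω →ₘ[P] ℝ | f ≤ g ∧ ∀ b : g.domain, g b ≤ p b}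
  obtain ⟨m, -, hmax⟩ := zorn_le_nonempty₀ S (fun c hcS hchain g hg =>
    ⟨LinearPMap.sSup c hchain.directedOn,
      ⟨(hcS hg).1.trans (LinearPMap.le_sSup _ hg), LinearPMap.sSup_apply_le ⟨g, hg⟩ _
        fun g hg => (hcS hg).2⟩,
      fun _ => LinearPMap.le_sSup _⟩) f ⟨le_rfl, hf⟩
  have htop : m.domain = ⊤ := by
    refine Submodule.eq_top_iff'.2 fun x => by_contra fun hx => ?_
    obtain ⟨c, hplus, hminus⟩ := hp.exists_add_le_and_sub_le hmax.1.2 x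
    obtain ⟨g, hmg, hg, hxg, -⟩ :=
      hp.exists_extension_apply_eq (hp.add_mul_le hmax.1.2 hplus hminus)
    exact hx ((hmax.2 ⟨hmax.1.1.trans hmg, hg⟩ hmg).1 hxg)
  exact ⟨m.toFun ∘ₗ (LinearEquiv.ofTop _ htop).symm.toLinearMap, fun _ => hmax.1.2 _,
    fun _ => (hmax.1.1.2 rfl).symm⟩

theorem exists_linearMap_le_apply_eq [IsFiniteMeasure P] {x : E} {c : Ω →ₘ[P] ℝ}
    (hc : c ≤ p x) (hc' : -c ≤ p (-x)) :
    ∃ F : E →ₗ[Ω →ₘ[P] ℝ] Ω →ₘ[P] ℝ, (∀ y, F y ≤ p y) ∧ F x = c := by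
  set f₀ : E →ₗ.[Ω →ₘ[P] ℝ] Ω →ₘ[P] ℝ := ⊥
  have h₀ : ∀ a : f₀.domain, (a : E) = 0 ∧ f₀ a = 0 := fun a => ⟨(Submodule.mem_bot _).1 a.2, rfl⟩
  have hf₀ : ∀ a : f₀.domain, f₀ a ≤ p a := fun a => by rw [(h₀ a).1, (h₀ a).2, hp.map_zero]
  obtain ⟨g, -, hg, hx, hgx⟩ := hp.exists_extension_apply_eq <| hp.add_mul_le (x := x) (c := c) hf₀
    (fun a => by rwa [(h₀ a).1, (h₀ a).2, zero_add, zero_add])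
    (fun a => by rwa [(h₀ a).1, (h₀ a).2, zero_sub, zero_sub])
  obtain ⟨F, hF, hFg⟩ := hp.exists_linearMap_extension g hg
  exact ⟨F, hF, (hFg ⟨x, hx⟩).trans hgx⟩

end IsL0Sublinear

end HahnBanach

section Gauge

variable {E : Type*} [AddCommGroup E] [Module (Ω →ₘ[P] ℝ) E]

variable (P) in
def gaugeSet (C : Set E) (x : E) : Set (Ω →ₘ[P] ℝ) :=
  {ξ | L0pos ξ ∧ ∃ b ∈ C, x = ξ • b}

variable (P) in
def IsL0Absorbent (C : Set E) : Prop :=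
  ∀ x, (gaugeSet P C x).Nonempty

variable {C : Set E}

lemma gaugeSet_add (hC : L0ConvexR (P := P) C) {x y : E} {ξ η : Ω →ₘ[P] ℝ}
    (hξ : ξ ∈ gaugeSet P C x) (hη : η ∈ gaugeSet P C y) : ξ + η ∈ gaugeSet P C (x + y) := by
  obtain ⟨hξ, a, ha, rfl⟩ := hξ
  obtain ⟨hη, b, hb, rfl⟩ := hη
  have hσ : L0pos (ξ + η) := hξ.add_nonneg hη.nonneg
  set θ := ξ * L0inv (ξ + η)
  have hθ : (ξ + η) * θ = ξ := by
    rw [mul_left_comm, hσ.mul_L0inv, mul_one]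
  have hθ₁ : θ ≤ 1 := by
    rw [← hσ.mul_L0inv]
    exact mul_le_mul_of_nonneg_right (le_add_of_nonneg_right hη.nonneg)
      (L0pos_L0inv hσ).nonneg
  refine ⟨hσ, θ • a + (1 - θ) • b,
    hC a ha b hb θ (mul_nonneg hξ.nonneg (L0pos_L0inv hσ).nonneg) hθ₁, ?_⟩
  rw [smul_add, smul_smul, smul_smul, hθ, mul_sub, hθ, mul_one, add_sub_cancel_left]

lemma gaugeSet_smul {x : E} {ξ η : Ω →ₘ[P] ℝ} (hη : L0pos η) (hξ : ξ ∈ gaugeSet P C x) :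
    η * ξ ∈ gaugeSet P C (η • x) := by
  obtain ⟨hξ, b, hb, rfl⟩ := hξ
  exact ⟨hη.mul hξ, b, hb, smul_smul η ξ b⟩

lemma gaugeSet_piecewise (hC : L0ConvexR (P := P) C) {A : Set Ω} (hA : MeasurableSet A)
    {x y : E} (hxy : indR (P := P) A hA • x = indR (P := P) A hA • y) {ξ η : Ω →ₘ[P] ℝ}
    (hξ : ξ ∈ gaugeSet P C x) (hη : η ∈ gaugeSet P C y) :
    piecewise A hA ξ η ∈ gaugeSet P C y := by
  obtain ⟨hξ, a, ha, rfl⟩ := hξ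
  obtain ⟨hη, b, hb, rfl⟩ := hη
  refine ⟨L0pos_piecewise hA (hξ.mono fun _ h _ => h) hη, _,
    hC a ha b hb _ (indR_nonneg hA) (indR_le_one hA), ?_⟩
  rw [piecewise_smul_add, hxy, ← add_smul, add_sub_cancel, one_smul]

section Finite

variable [IsFiniteMeasure P]

lemma isGLB_gaugeR {x : E} (hx : (gaugeSet P C x).Nonempty) :
    IsGLB (gaugeSet P C x) (gaugeR (P := P) C x) := by
  have h : ∃ s, IsGLB {ξ : Ω →ₘ[P] ℝ | L0pos ξ ∧ ∃ b ∈ C, x = ξ • b} s :=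
    exists_isGLB hx ⟨0, fun ξ hξ => hξ.1.nonneg⟩
  rw [gaugeR, dif_pos h]
  exact h.choose_spec

variable (habs : IsL0Absorbent P C)
include habs

lemma gaugeR_nonneg (x : E) : 0 ≤ gaugeR (P := P) C x :=
  (isGLB_gaugeR (habs x)).2 fun _ hξ => hξ.1.nonneg

lemma gaugeR_le_one {x : E} (hx : x ∈ C) : gaugeR (P := P) C x ≤ 1 :=
  (isGLB_gaugeR (habs x)).1 ⟨L0pos_one, x, hx, (one_smul _ x).symm⟩

lemma gaugeR_add (hC : L0ConvexR (P := P) C) (x y : E) :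
    gaugeR (P := P) C (x + y) ≤ gaugeR C x + gaugeR C y := by
  have h : ∀ η ∈ gaugeSet P C y, gaugeR (P := P) C (x + y) - gaugeR C x ≤ η := fun η hη =>
    sub_le_comm.1 <| (isGLB_gaugeR (habs x)).2 fun ξ hξ =>
      sub_le_iff_le_add.2 <| (isGLB_gaugeR (habs _)).1 (gaugeSet_add hC hξ hη)
  exact sub_le_iff_le_add'.1 ((isGLB_gaugeR (habs y)).2 h)

lemma gaugeR_smul_le {η : Ω →ₘ[P] ℝ} (hη : L0pos η) (x : E) :
    gaugeR (P := P) C (η • x) ≤ η * gaugeR C x := by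
  have h : L0inv η * gaugeR (P := P) C (η • x) ≤ gaugeR C x :=
    (isGLB_gaugeR (habs x)).2 fun ξ hξ => calc
      L0inv η * gaugeR (P := P) C (η • x) ≤ L0inv η * (η * ξ) :=
        mul_le_mul_of_nonneg_left ((isGLB_gaugeR (habs _)).1 (gaugeSet_smul hη hξ))
          (L0pos_L0inv hη).nonneg
      _ = ξ := by rw [← mul_assoc, hη.L0inv_mul, one_mul]
  calc gaugeR (P := P) C (η • x) = η * (L0inv η * gaugeR C (η • x)) := by
        rw [← mul_assoc, hη.mul_L0inv, one_mul]
    _ ≤ η * gaugeR C x := mul_le_mul_of_nonneg_left h hη.nonneg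

lemma gaugeR_smul {η : Ω →ₘ[P] ℝ} (hη : L0pos η) (x : E) :
    gaugeR (P := P) C (η • x) = η * gaugeR C x := by
  refine le_antisymm (gaugeR_smul_le habs hη x) ?_
  have h := gaugeR_smul_le habs (L0pos_L0inv hη) (η • x)
  rw [smul_smul, hη.L0inv_mul, one_smul] at h
  calc η * gaugeR (P := P) C x ≤ η * (L0inv η * gaugeR C (η • x)) :=
        mul_le_mul_of_nonneg_left h hη.nonneg
    _ = gaugeR C (η • x) := by rw [← mul_assoc, hη.mul_L0inv, one_mul]

lemma gaugeR_ae_le_on (hC : L0ConvexR (P := P) C) {A : Set Ω} (hA : MeasurableSet A) {x y : E}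
    (hxy : indR (P := P) A hA • x = indR (P := P) A hA • y) :
    ∀ᵐ ω ∂P, ω ∈ A → gaugeR (P := P) C x ω ≤ gaugeR (P := P) C y ω := by
  refine ae_le_on_of_isGLB hA (isGLB_gaugeR (habs y)) fun η hη => ?_
  obtain ⟨ξ, hξ⟩ := habs x
  filter_upwards [le_ae ((isGLB_gaugeR (habs x)).1 (gaugeSet_piecewise hC hA hxy.symm hη hξ)),
    coeFn_piecewise_of_mem hA η ξ] with ω h₁ h₂ hω
  rw [← h₂ hω]
  exact h₁

theorem isL0Sublinear_gaugeR (hC : L0ConvexR (P := P) C) : IsL0Sublinear (gaugeR (P := P) C) where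
  add_le := gaugeR_add habs hC
  smul_of_L0pos _ hη := gaugeR_smul habs hη
  ae_eq_on A hA _ _ hxy := by
    filter_upwards [gaugeR_ae_le_on habs hC hA hxy, gaugeR_ae_le_on habs hC hA hxy.symm]
      with ω h₁ h₂ hω using le_antisymm (h₁ hω) (h₂ hω)

end Finite

end Gauge

section Norm

variable {E : Type*} [AddCommGroup E] {nrm : E → Ω →ₘ[P] ℝ}

lemma exists_ball_of_mem_interior {G : Set E} {x : E} (hx : x ∈ @interior E (TcTop nrm) G) :
    ∃ ε, L0pos ε ∧ ∀ y, ltAE (nrm (y - x)) ε → y ∈ G := by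
  let := TcTop nrm
  obtain ⟨U, hUG, hU, hxU⟩ := mem_interior.1 hx
  obtain ⟨⟨ε, hε⟩, hball⟩ := hU x hxU
  exact ⟨ε, hε, fun y hy => hUG (hball hy)⟩

variable [Module (Ω →ₘ[P] ℝ) E]

lemma ltAE_of_L0pos_sub {ξ η : Ω →ₘ[P] ℝ} (h : L0pos (η - ξ)) : ltAE ξ η := by
  filter_upwards [h, sub_ae η ξ] with ω h₁ h₂
  rw [h₂] at h₁
  exact sub_pos.1 h₁

lemma absR_eq_abs (ξ : Ω →ₘ[P] ℝ) : absR ξ = |ξ| := AEEqFun.ext <| by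
  filter_upwards [coeFn_absR ξ, AEEqFun.coeFn_abs ξ] with ω h₁ h₂
  rw [h₁, h₂]

namespace IsRNNormR

variable (hnrm : IsRNNormR nrm)
include hnrm

lemma smul_of_nonneg {ξ : Ω →ₘ[P] ℝ} (hξ : 0 ≤ ξ) (x : E) : nrm (ξ • x) = ξ * nrm x := by
  rw [hnrm.smul_eq, absR_of_nonneg hξ]

lemma neg (x : E) : nrm (-x) = nrm x := by
  rw [← neg_one_smul (Ω →ₘ[P] ℝ) x, hnrm.smul_eq, absR_neg, absR_of_nonneg zero_le_one, one_mul]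

lemma mem_BddR_of_le {F : E →ₗ[Ω →ₘ[P] ℝ] Ω →ₘ[P] ℝ} {K : Ω →ₘ[P] ℝ} (hK : 0 ≤ K)
    (hF : ∀ x, F x ≤ K * nrm x) : F ∈ BddR nrm :=
  ⟨K, hK, fun x => by
    rw [absR_eq_abs, abs_le', ← map_neg]
    exact ⟨hF x, (hF (-x)).trans_eq (by rw [hnrm.neg])⟩⟩

lemma mem_gaugeSet_of_ball {C : Set E} {ε : Ω →ₘ[P] ℝ} (hε : L0pos ε)
    (hball : ∀ w, ltAE (nrm w) ε → w ∈ C) (x : E) {δ : ℝ} (hδ : 0 < δ) :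
    L0inv ε * nrm x + AEEqFun.const Ω δ ∈ gaugeSet P C x := by
  have hξ : L0pos (L0inv ε * nrm x + AEEqFun.const Ω δ) := by
    rw [add_comm]
    exact (L0pos_const hδ).add_nonneg (mul_nonneg (L0pos_L0inv hε).nonneg (hnrm.nonneg x))
  set ξ := L0inv ε * nrm x + AEEqFun.const Ω δ
  refine ⟨hξ, L0inv ξ • x, hball _ ?_, by rw [smul_smul, hξ.mul_L0inv, one_smul]⟩
  rw [hnrm.smul_of_nonneg (L0pos_L0inv hξ).nonneg]
  refine ltAE_of_L0pos_sub ?_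
  have h : ε - L0inv ξ * nrm x = L0inv ξ * (ε * AEEqFun.const Ω δ) := by
    linear_combination (-ε) * hξ.mul_L0inv + (L0inv ξ * nrm x) * hε.mul_L0inv
  rw [h]
  exact (L0pos_L0inv hξ).mul (hε.mul (L0pos_const hδ))

lemma isL0Absorbent_of_ball {C : Set E} {ε : Ω →ₘ[P] ℝ} (hε : L0pos ε)
    (hball : ∀ w, ltAE (nrm w) ε → w ∈ C) : IsL0Absorbent P C := fun x =>
  ⟨_, hnrm.mem_gaugeSet_of_ball hε hball x one_pos⟩

lemma gaugeR_le_L0inv_mul [IsFiniteMeasure P] {C : Set E} {ε : Ω →ₘ[P] ℝ} (hε : L0pos ε)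
    (hball : ∀ w, ltAE (nrm w) ε → w ∈ C) (x : E) : gaugeR (P := P) C x ≤ L0inv ε * nrm x :=
  le_of_forall_le_add_const fun _ hδ =>
    (isGLB_gaugeR ⟨_, hnrm.mem_gaugeSet_of_ball hε hball x hδ⟩).1
      (hnrm.mem_gaugeSet_of_ball hε hball x hδ)

lemma exists_add_smul_mem_of_ball {G : Set E} {x : E} {ε : Ω →ₘ[P] ℝ} (hε : L0pos ε)
    (hball : ∀ y, ltAE (nrm (y - x)) ε → y ∈ G) (z : E) :
    ∃ ξ : Ω →ₘ[P] ℝ, L0pos ξ ∧ x + ξ • z ∈ G := by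
  have hz : L0pos (nrm z + 1) := by
    rw [add_comm]
    exact L0pos_one.add_nonneg (hnrm.nonneg z)
  have hξ := hε.mul (L0pos_L0inv hz)
  refine ⟨_, hξ, hball _ (ltAE_of_L0pos_sub ?_)⟩
  have h : ε - ε * L0inv (nrm z + 1) * nrm z = ε * L0inv (nrm z + 1) := by
    linear_combination (-ε) * hz.mul_L0inv
  rwa [add_sub_cancel_left, hnrm.smul_of_nonneg hξ.nonneg, h]

end IsRNNormR

end Norm

section Separation

open Pointwise

variable {E : Type*} [AddCommGroup E] {G M : Set E}

lemma ball_subset_vadd_sub {nrm : E → Ω →ₘ[P] ℝ} {x₀ m₀ : E} {ε : Ω →ₘ[P] ℝ}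
    (hball : ∀ y, ltAE (nrm (y - x₀)) ε → y ∈ G) (hm₀ : m₀ ∈ M) :
    ∀ w, ltAE (nrm w) ε → w ∈ (m₀ - x₀) +ᵥ (G - M) := fun w hw =>
  ⟨x₀ + w - m₀, ⟨x₀ + w, hball _ (by rwa [add_sub_cancel_left]), m₀, hm₀, rfl⟩,
    by simp only [vadd_eq_add]; abel⟩

variable [Module (Ω →ₘ[P] ℝ) E]

lemma L0ConvexR.sub (hG : L0ConvexR (P := P) G) (hM : L0ConvexR (P := P) M) :
    L0ConvexR (P := P) (G - M) := by
  rintro _ ⟨g₁, hg₁, m₁, hm₁, rfl⟩ _ ⟨g₂, hg₂, m₂, hm₂, rfl⟩ ξ hξ₀ hξ₁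
  refine ⟨_, hG g₁ hg₁ g₂ hg₂ ξ hξ₀ hξ₁, _, hM m₁ hm₁ m₂ hm₂ ξ hξ₀ hξ₁, ?_⟩
  module

lemma L0ConvexR.vadd {S : Set E} (hS : L0ConvexR (P := P) S) (z : E) :
    L0ConvexR (P := P) (z +ᵥ S) := by
  rintro _ ⟨s₁, hs₁, rfl⟩ _ ⟨s₂, hs₂, rfl⟩ ξ hξ₀ hξ₁
  refine ⟨_, hS s₁ hs₁ s₂ hs₂ ξ hξ₀ hξ₁, ?_⟩
  simp only [vadd_eq_add]
  module

variable {H : Set Ω}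

lemma DisjStratR.ae_one_le_on (hH : DisjStratR (P := P) G M H) (hGc : L0ConvexR (P := P) G)
    (hMc : L0ConvexR (P := P) M) {g x₀ m m₀ : E} (hg : g ∈ G) (hx₀ : x₀ ∈ G) (hm : m ∈ M)
    (hm₀ : m₀ ∈ M) {ξ : Ω →ₘ[P] ℝ} (hξ : 0 ≤ ξ)
    (h : ξ • g + (1 - ξ) • x₀ = ξ • m + (1 - ξ) • m₀) : ∀ᵐ ω ∂P, ω ∈ H → 1 ≤ ξ ω := by
  set B := H ∩ {ω | ξ ω < 1}
  have hB : MeasurableSet B := hH.1.inter (measurableSet_lt ξ.measurable measurable_const)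
  suffices hB0 : P B = 0 by
    refine ae_iff.2 (measure_mono_null (fun ω hω => ?_) hB0)
    push Not at hω
    exact hω
  by_contra hpos
  -- truncating `ξ` to `B` gives a weight in `[0, 1]` that agrees with `ξ` on `B`
  set ζ := indR B hB * ξ
  have hζ₁ : ζ ≤ 1 := le_of_ae <| by
    filter_upwards [mul_ae (indR B hB) ξ, coeFn_indR_of_mem hB, coeFn_indR_of_notMem hB,
      one_ae (P := P) ℝ] with ω h₀ h₁ h₂ h₃
    rw [h₀, h₃]
    by_cases hω : ω ∈ B
    · rw [h₁ hω, one_mul]; exact hω.2.le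
    · rw [h₂ hω, zero_mul]; exact zero_le_one
  have hBζ : indR B hB * ζ = indR B hB * ξ := by rw [← mul_assoc, indR_mul_self]
  have hcongr : ∀ u v : E, indR (P := P) B hB • (ζ • u + (1 - ζ) • v) =
      indR (P := P) B hB • (ξ • u + (1 - ξ) • v) := fun u v => by
    rw [smul_add, smul_add, smul_smul, smul_smul, smul_smul, smul_smul, mul_sub, mul_sub, hBζ]
  have hζ₀ : 0 ≤ ζ := mul_nonneg (indR_nonneg hB) hξ
  exact hH.2.1 B hB Set.inter_subset_left (pos_iff_ne_zero.2 hpos) _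
    (hGc g hg x₀ hx₀ ζ hζ₀ hζ₁) _ (hMc m hm m₀ hm₀ ζ hζ₀ hζ₁) (by rw [hcongr, hcongr, h])


section Finite

variable [IsFiniteMeasure P]

lemma indR_le_gaugeR (hH : DisjStratR (P := P) G M H) (hGc : L0ConvexR (P := P) G)
    (hMc : L0ConvexR (P := P) M) {x₀ m₀ : E} (hx₀ : x₀ ∈ G) (hm₀ : m₀ ∈ M)
    (habs : IsL0Absorbent P ((m₀ - x₀) +ᵥ (G - M))) :
    indR H hH.1 ≤ gaugeR (P := P) ((m₀ - x₀) +ᵥ (G - M)) (m₀ - x₀) := by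
  have h₁ : ∀ᵐ ω ∂P, ω ∈ H →
      (1 : Ω →ₘ[P] ℝ) ω ≤ gaugeR (P := P) ((m₀ - x₀) +ᵥ (G - M)) (m₀ - x₀) ω := by
    refine ae_le_on_of_isGLB hH.1 (isGLB_gaugeR (habs _)) ?_
    rintro ξ ⟨hξ, _, ⟨_, ⟨g, hg, m, hm, rfl⟩, rfl⟩, hz⟩
    simp only [vadd_eq_add] at hz
    filter_upwards [hH.ae_one_le_on hGc hMc hg hx₀ hm hm₀ hξ.nonneg
      (by linear_combination (norm := module) -hz), one_ae (P := P) ℝ] with ω h h₁ hω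
    rw [h₁]
    exact h hω
  refine le_of_ae ?_
  filter_upwards [h₁, one_ae (P := P) ℝ, le_ae (gaugeR_nonneg habs (m₀ - x₀)),
    zero_ae (P := P) ℝ, coeFn_indR_of_mem hH.1, coeFn_indR_of_notMem hH.1]
    with ω h h₁ h₀ hz hin hout
  by_cases hω : ω ∈ H
  · rw [hin hω, ← h₁]; exact h hω
  · rw [hout hω, ← hz]; exact h₀

lemma ae_le_on_of_le_gaugeR {z : E} (habs : IsL0Absorbent P (z +ᵥ (G - M)))
    (hH : MeasurableSet H) {F : E →ₗ[Ω →ₘ[P] ℝ] Ω →ₘ[P] ℝ}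
    (hFp : ∀ y, F y ≤ gaugeR (P := P) (z +ᵥ (G - M)) y) (hFz : F z = indR H hH) :
    ∀ x ∈ G, ∀ y ∈ M, ∀ᵐ ω ∂P, ω ∈ H → F x ω ≤ F y ω := by
  intro x hx y hy
  have h : F z + (F x - F y) ≤ 1 := by
    rw [← map_sub, ← map_add]
    exact (hFp _).trans (gaugeR_le_one habs ⟨x - y, ⟨x, hx, y, hy, rfl⟩, rfl⟩)
  rw [hFz] at h
  filter_upwards [le_ae h, add_ae (indR H hH) (F x - F y), sub_ae (F x) (F y),
    coeFn_indR_of_mem hH, one_ae (P := P) ℝ] with ω h h₁ h₂ h₃ h₄ hω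
  rw [h₁, h₂, h₃ hω, h₄] at h
  linarith

end Finite

lemma IsRNNormR.ae_lt_on_of_ae_le_on {nrm : E → Ω →ₘ[P] ℝ} (hnrm : IsRNNormR nrm)
    (hH : MeasurableSet H) {F : E →ₗ[Ω →ₘ[P] ℝ] Ω →ₘ[P] ℝ} {z : E} (hFz : F z = indR H hH)
    (hsep : ∀ x ∈ G, ∀ y ∈ M, ∀ᵐ ω ∂P, ω ∈ H → F x ω ≤ F y ω) {x y : E}
    (hx : x ∈ @interior E (TcTop nrm) G) (hy : y ∈ M) :
    ∀ᵐ ω ∂P, ω ∈ H → F x ω < F y ω := by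
  obtain ⟨ε, hε, hball⟩ := exists_ball_of_mem_interior hx
  obtain ⟨ξ, hξ, hmem⟩ := hnrm.exists_add_smul_mem_of_ball hε hball z
  have h : F (x + ξ • z) = F x + ξ * indR H hH := by rw [map_add, map_smul, hFz, smul_eq_mul]
  filter_upwards [hsep _ hmem y hy, hξ, add_ae (F x) (ξ * indR H hH), mul_ae ξ (indR H hH),
    coeFn_indR_of_mem hH] with ω hle hξω h₁ h₂ h₃ hω
  have := hle hω
  rw [h, h₁, h₂, h₃ hω, mul_one] at this
  linarith

end Separation

end RNM

open MeasureTheory RNM in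
theorem separation_RN_real_general {Ω : Type} [MeasurableSpace Ω] {P : Measure Ω}
    [IsProbabilityMeasure P] {E : Type*} [AddCommGroup E] [Module (Ω →ₘ[P] ℝ) E]
    (nrm : E → Ω →ₘ[P] ℝ) (hnrm : IsRNNormR nrm) (G M : Set E)
    (hMne : M.Nonempty) (hGc : L0ConvexR (P := P) G) (hMc : L0ConvexR (P := P) M)
    (hint : (@interior E (TcTop nrm) G).Nonempty)
    (H : Set Ω) (hH : DisjStratR (P := P) G M H) :
    ∃ f ∈ BddR nrm,
      (∀ x ∈ G, ∀ y ∈ M, ∀ᵐ ω ∂P, ω ∈ H → f x ω ≤ f y ω) ∧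
      (∀ x ∈ @interior E (TcTop nrm) G, ∀ y ∈ M, ∀ᵐ ω ∂P, ω ∈ H → f x ω < f y ω) := by
  obtain ⟨x₀, hx₀⟩ := hint
  obtain ⟨ε₀, hε₀, hball₀⟩ := exists_ball_of_mem_interior hx₀
  obtain ⟨m₀, hm₀⟩ := hMne
  have hxG : x₀ ∈ G := @interior_subset E (TcTop nrm) G x₀ hx₀
  have hCball := ball_subset_vadd_sub hball₀ hm₀
  have habs := hnrm.isL0Absorbent_of_ball hε₀ hCball
  have hp := isL0Sublinear_gaugeR habs ((hGc.sub hMc).vadd _)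
  obtain ⟨F, hFp, hFz⟩ := hp.exists_linearMap_le_apply_eq (indR_le_gaugeR hH hGc hMc hxG hm₀ habs)
    ((neg_nonpos.2 (indR_nonneg hH.1)).trans (gaugeR_nonneg habs _))
  have hsep := ae_le_on_of_le_gaugeR habs hH.1 hFp hFz
  exact ⟨F, hnrm.mem_BddR_of_le (L0pos_L0inv hε₀).nonneg
    (fun x => (hFp x).trans (hnrm.gaugeR_le_L0inv_mul hε₀ hCball x)), hsep,
    fun _ hx _ hy => hnrm.ae_lt_on_of_ae_le_on hH.1 hFz hsep hx hy⟩

open MeasureTheory RNM in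
/-- Hyperplane separation in `RN` modules over `ℝ` (Lemma 3.1): if `G`, `M` are nonempty
`L⁰`-convex sets with the countable concatenation property, `G` has nonempty
`𝓣_c`-interior and `G ∩ M = ∅`, then some `f ∈ E*` separates `G` from `M` a.e. on the
hereditarily disjoint stratification `H(G,M)`, strictly so on the interior of `G`. -/
theorem separation_RN_real {Ω : Type} [MeasurableSpace Ω] {P : Measure Ω}
    [IsProbabilityMeasure P] {E : Type*} [AddCommGroup E] [Module (Ω →ₘ[P] ℝ) E]
    (nrm : E → Ω →ₘ[P] ℝ) (hnrm : IsRNNormR nrm) (G M : Set E)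
    (hGne : G.Nonempty) (hMne : M.Nonempty) (hGc : L0ConvexR (P := P) G) (hMc : L0ConvexR (P := P) M)
    (hGcc : SetCCPR (P := P) G) (hMcc : SetCCPR (P := P) M)
    (hint : (@interior E (TcTop nrm) G).Nonempty) (hdisj : Disjoint G M)
    (H : Set Ω) (hH : DisjStratR (P := P) G M H) :
    ∃ f ∈ BddR nrm,
      (∀ x ∈ G, ∀ y ∈ M, ∀ᵐ ω ∂P, ω ∈ H → f x ω ≤ f y ω) ∧
      (∀ x ∈ @interior E (TcTop nrm) G, ∀ y ∈ M, ∀ᵐ ω ∂P, ω ∈ H → f x ω < f y ω) :=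
  separation_RN_real_general nrm hnrm G M hMne hGc hMc hint H hH
end
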